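/- arXiv:1408.2164 — 6 statements merged into one kernel-verified Lean document; each statement's English description precedes it below -/
import Mathlib

section
/- Let a, b ≥ 0 with a + b > 2 and a = 2 (with b arbitrary satisfying the constraints). Then there exists a constant C > 0 such that for all x ∈ ℝ², ∫_{ℝ²} (1+|y|)^{-a} (1+|x−y|)^{-b} dy ≤ C ( (1+|x|)^{-2} + log(e+|x|) (1+|x|)^{-(a+b−2)} ). -/
/-!
Put `R = ‖x‖`, `n = dim E`, and split `E` into three regions. Where `‖y‖ ≤ R/2` we have
`‖x - y‖ ≥ R/2`, so the second factor is `≲ (1+R)^(-b)`, while `(1+‖y‖)^(-n)` integrates over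
the ball to `≲ log (1+R)`: the exponent `n` is exactly critical. Where `‖x - y‖ ≤ R/2` the first
factor is `≲ (1+R)^(-n)` and `(1+‖z‖)^(-b)` integrates over a ball of radius `R/2` to
`≲ (1+R)^(n-b) log (e+R)` if `b ≤ n`, and to a constant if `b > n`. Everywhere else
`1 + ‖y‖ ≤ 3 (1 + ‖x - y‖)`, so the integrand is `≲ (1+‖y‖)^(-(n+b))`, whose integral over
`‖y‖ > R/2` is `≲ (1+R)^(-b)`. The radial integrals are computed in polar coordinates.
-/

open MeasureTheory Metric Set Module Real Filter Topology

lemma rpow_neg_le_mul_rpow_neg {u v k p : ℝ} (hu : 0 < u) (hk : 0 < k) (hp : 0 ≤ p)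
    (h : u ≤ k * v) : v ^ (-p) ≤ k ^ p * u ^ (-p) := by
  have hv : u / k ≤ v := by rwa [div_le_iff₀' hk]
  calc v ^ (-p) ≤ (u / k) ^ (-p) := rpow_le_rpow_of_nonpos (by positivity) hv (by linarith)
    _ = k ^ p * u ^ (-p) := by
      rw [div_rpow hu.le hk.le, rpow_neg hk.le, div_inv_eq_mul, mul_comm]

lemma pow_pred_mul_one_add_rpow_neg_le {n : ℕ} (hn : 1 ≤ n) {t : ℝ} (ht : 0 ≤ t) (q : ℝ) :
    t ^ (n - 1) * (1 + t) ^ (-q) ≤ (1 + t) ^ ((n : ℝ) - 1 - q) := by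
  have h1 : 0 < 1 + t := by linarith
  calc t ^ (n - 1) * (1 + t) ^ (-q) ≤ (1 + t) ^ (n - 1) * (1 + t) ^ (-q) := by
        gcongr; linarith
    _ = (1 + t) ^ ((n : ℝ) - 1 - q) := by
      rw [← rpow_natCast, Nat.cast_sub hn, ← rpow_add h1]; ring_nf

lemma integral_Ioc_inv_one_add {r : ℝ} (hr : 0 ≤ r) :
    ∫ t in Ioc 0 r, (1 + t)⁻¹ = log (1 + r) := by
  rw [← intervalIntegral.integral_of_le hr,
    intervalIntegral.integral_comp_add_left (fun t => t⁻¹), integral_inv]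
  · simp
  · rw [uIcc_of_le (by linarith)]; intro h; linarith [h.1]

lemma integrableOn_Ioi_one_add_rpow {p r : ℝ} (hp : p < -1) (hr : -1 < r) :
    IntegrableOn (fun t => (1 + t) ^ p) (Ioi r) := by
  simpa [add_comm] using integrableOn_add_rpow_Ioi_of_lt hp hr

lemma integral_Ioi_one_add_rpow {p r : ℝ} (hp : p < -1) (hr : 0 ≤ r) :
    ∫ t in Ioi r, (1 + t) ^ p = (1 + r) ^ (p + 1) / -(p + 1) := by
  have hderiv : ∀ t ∈ Ici r, HasDerivAt (fun t => (1 + t) ^ (p + 1) / (p + 1)) ((1 + t) ^ p) t := by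
    intro t ht
    have h1t : 1 + t ≠ 0 := by linarith [ht.out]
    refine ((((hasDerivAt_id' t).const_add 1).rpow_const (Or.inl h1t)).div_const
      (p + 1)).congr_deriv ?_
    rw [add_sub_cancel_right]
    field_simp [show p + 1 ≠ 0 by linarith]
  have hlim : Tendsto (fun t => (1 + t) ^ (p + 1) / (p + 1)) atTop (𝓝 0) := by
    simpa using ((tendsto_rpow_neg_atTop (by linarith : 0 < -(p + 1))).comp
      (tendsto_atTop_add_const_left _ 1 tendsto_id)).div_const (p + 1)
  rw [integral_Ioi_of_hasDerivAt_of_tendsto' hderiv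
    (integrableOn_Ioi_one_add_rpow hp (by linarith)) hlim, div_neg]
  ring

lemma continuous_one_add_norm_rpow {F : Type*} [SeminormedAddCommGroup F] (p : ℝ) :
    Continuous fun y : F => (1 + ‖y‖) ^ p :=
  (continuous_const.add continuous_norm).rpow_const fun y =>
    Or.inl (add_pos_of_pos_of_nonneg one_pos (norm_nonneg y)).ne'

section Pointwise

variable {F : Type*} [SeminormedAddCommGroup F]

lemma one_add_norm_le_two_mul_one_add_norm_sub {x y : F} (h : ‖y‖ ≤ ‖x‖ / 2) :
    1 + ‖x‖ ≤ 2 * (1 + ‖x - y‖) := by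
  linarith [norm_sub_norm_le x y]

lemma one_add_norm_le_three_mul_one_add_norm_sub {x y : F} (h : ‖x‖ / 2 < ‖x - y‖) :
    1 + ‖y‖ ≤ 3 * (1 + ‖x - y‖) := by
  have := norm_sub_norm_le y x
  rw [norm_sub_rev y x] at this
  linarith

lemma one_add_norm_rpow_mul_le_indicators {a b : ℝ} (ha : 0 ≤ a) (hb : 0 ≤ b) (x y : F) :
    (1 + ‖y‖) ^ (-a) * (1 + ‖x - y‖) ^ (-b) ≤
      (closedBall 0 (‖x‖ / 2)).indicator
          (fun z => 2 ^ b * (1 + ‖x‖) ^ (-b) * (1 + ‖z‖) ^ (-a)) y +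
        (closedBall 0 (‖x‖ / 2)).indicator
          (fun z => 2 ^ a * (1 + ‖x‖) ^ (-a) * (1 + ‖z‖) ^ (-b)) (x - y) +
        (closedBall 0 (‖x‖ / 2))ᶜ.indicator (fun z => 3 ^ b * (1 + ‖z‖) ^ (-(a + b))) y := by
  have h₁ := indicator_nonneg (s := closedBall 0 (‖x‖ / 2))
    (fun z _ => by positivity : ∀ z ∈ _, 0 ≤ 2 ^ b * (1 + ‖x‖) ^ (-b) * (1 + ‖z‖) ^ (-a)) y
  have h₂ := indicator_nonneg (s := closedBall 0 (‖x‖ / 2))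
    (fun z _ => by positivity : ∀ z ∈ _, 0 ≤ 2 ^ a * (1 + ‖x‖) ^ (-a) * (1 + ‖z‖) ^ (-b)) (x - y)
  have h₃ := indicator_nonneg (s := (closedBall 0 (‖x‖ / 2))ᶜ)
    (fun z _ => by positivity : ∀ z ∈ _, 0 ≤ 3 ^ b * (1 + ‖z‖) ^ (-(a + b))) y
  by_cases hy : ‖y‖ ≤ ‖x‖ / 2
  · have : (1 + ‖y‖) ^ (-a) * (1 + ‖x - y‖) ^ (-b) ≤ (closedBall 0 (‖x‖ / 2)).indicator
        (fun z => 2 ^ b * (1 + ‖x‖) ^ (-b) * (1 + ‖z‖) ^ (-a)) y := by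
      rw [indicator_of_mem (mem_closedBall_zero_iff.2 hy), mul_comm]
      gcongr
      exact rpow_neg_le_mul_rpow_neg (by positivity) two_pos hb
        (one_add_norm_le_two_mul_one_add_norm_sub hy)
    linarith
  by_cases hxy : ‖x - y‖ ≤ ‖x‖ / 2
  · have : (1 + ‖y‖) ^ (-a) * (1 + ‖x - y‖) ^ (-b) ≤ (closedBall 0 (‖x‖ / 2)).indicator
        (fun z => 2 ^ a * (1 + ‖x‖) ^ (-a) * (1 + ‖z‖) ^ (-b)) (x - y) := by
      have hx : 1 + ‖x‖ ≤ 2 * (1 + ‖y‖) := by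
        simpa using one_add_norm_le_two_mul_one_add_norm_sub hxy
      rw [indicator_of_mem (mem_closedBall_zero_iff.2 hxy)]
      gcongr
      exact rpow_neg_le_mul_rpow_neg (by positivity) two_pos ha hx
    linarith
  · have : (1 + ‖y‖) ^ (-a) * (1 + ‖x - y‖) ^ (-b) ≤ (closedBall 0 (‖x‖ / 2))ᶜ.indicator
        (fun z => 3 ^ b * (1 + ‖z‖) ^ (-(a + b))) y := by
      rw [indicator_of_mem (by simpa using hy)]
      calc _ ≤ (1 + ‖y‖) ^ (-a) * (3 ^ b * (1 + ‖y‖) ^ (-b)) := by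
            gcongr
            exact rpow_neg_le_mul_rpow_neg (by positivity) (by norm_num) hb
              (one_add_norm_le_three_mul_one_add_norm_sub (not_le.1 hxy))
        _ = 3 ^ b * (1 + ‖y‖) ^ (-(a + b)) := by
          rw [neg_add, rpow_add (by positivity)]; ring
    linarith

end Pointwise

noncomputable def decayBound (a b R : ℝ) : ℝ := (1 + R) ^ (-a) + log (exp 1 + R) * (1 + R) ^ (-b)

section decayBound

variable {a b R : ℝ}

lemma one_le_log_exp_one_add (hR : 0 ≤ R) : 1 ≤ log (exp 1 + R) := by
  rw [le_log_iff_exp_le (by positivity)]; linarith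

lemma rpow_neg_fst_le_decayBound (hR : 0 ≤ R) : (1 + R) ^ (-a) ≤ decayBound a b R :=
  le_add_of_nonneg_right
    (mul_nonneg (zero_le_one.trans (one_le_log_exp_one_add hR)) (by positivity))

lemma log_mul_rpow_neg_le_decayBound (hR : 0 ≤ R) :
    log (exp 1 + R) * (1 + R) ^ (-b) ≤ decayBound a b R :=
  le_add_of_nonneg_left (by positivity)

lemma rpow_neg_snd_le_decayBound (hR : 0 ≤ R) : (1 + R) ^ (-b) ≤ decayBound a b R :=
  (le_mul_of_one_le_left (by positivity) (one_le_log_exp_one_add hR)).trans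
    (log_mul_rpow_neg_le_decayBound hR)

lemma decayBound_nonneg (hR : 0 ≤ R) : 0 ≤ decayBound a b R :=
  (rpow_nonneg (by linarith) _).trans (rpow_neg_fst_le_decayBound hR)

lemma log_one_add_half_le_log_exp_one_add (hR : 0 ≤ R) :
    log (1 + R / 2) ≤ log (exp 1 + R) :=
  log_le_log (by positivity) (by linarith [one_le_exp zero_le_one])

end decayBound

section Haar

variable {E : Type*} [NormedAddCommGroup E] [NormedSpace ℝ E] [MeasurableSpace E] [BorelSpace E]
  [FiniteDimensional ℝ E] (μ : Measure E) [μ.IsAddHaarMeasure]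

lemma integrable_indicator_closedBall_mul_one_add_norm_rpow (c p r : ℝ) :
    Integrable ((closedBall (0 : E) r).indicator fun z => c * (1 + ‖z‖) ^ p) μ :=
  (ContinuousOn.integrableOn_compact (isCompact_closedBall 0 r)
    (continuous_const.mul (continuous_one_add_norm_rpow p)).continuousOn).integrable_indicator
    measurableSet_closedBall

variable [Nontrivial E]

lemma setIntegral_fun_norm_addHaar (f : ℝ → ℝ) {s : Set ℝ} (hs : MeasurableSet s) :
    ∫ y in (‖·‖) ⁻¹' s, f ‖y‖ ∂μ =
      finrank ℝ E * μ.real (ball 0 1) * ∫ t in Ioi 0 ∩ s, t ^ (finrank ℝ E - 1) * f t := by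
  rw [← integral_indicator (measurable_norm hs)]
  change ∫ y, s.indicator f ‖y‖ ∂μ = _
  rw [integral_fun_norm_addHaar μ, ← setIntegral_indicator hs]
  simp only [nsmul_eq_mul, smul_eq_mul, mul_assoc, indicator_mul_right]

lemma setIntegral_closedBall_one_add_norm_rpow_neg_finrank_le {r : ℝ} (hr : 0 ≤ r) :
    ∫ y in closedBall (0 : E) r, (1 + ‖y‖) ^ (-(finrank ℝ E : ℝ)) ∂μ ≤
      finrank ℝ E * μ.real (ball 0 1) * log (1 + r) := by
  have hball : closedBall (0 : E) r = (‖·‖) ⁻¹' Iic r := by ext; simp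
  rw [hball, setIntegral_fun_norm_addHaar μ (fun t => (1 + t) ^ (-(finrank ℝ E : ℝ)))
    measurableSet_Iic, Ioi_inter_Iic, ← integral_Ioc_inv_one_add hr]
  refine mul_le_mul_of_nonneg_left ?_ (by positivity)
  refine integral_mono_of_nonneg (ae_restrict_of_forall_mem measurableSet_Ioc fun t ht => ?_) ?_
    (ae_restrict_of_forall_mem measurableSet_Ioc fun t ht => ?_)
  · have := ht.1.le; positivity
  · refine (ContinuousOn.integrableOn_Icc ?_).mono_set Ioc_subset_Icc_self
    exact ContinuousOn.inv₀ (by fun_prop) fun t ht => by linarith [ht.1]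
  · have := pow_pred_mul_one_add_rpow_neg_le (finrank_pos : 0 < finrank ℝ E) ht.1.le
      (finrank ℝ E)
    rwa [sub_sub_cancel_left, rpow_neg_one] at this

lemma setIntegral_compl_closedBall_one_add_norm_rpow_neg_le {q r : ℝ}
    (hq : finrank ℝ E < q) (hr : 0 ≤ r) :
    ∫ y in (closedBall (0 : E) r)ᶜ, (1 + ‖y‖) ^ (-q) ∂μ ≤
      finrank ℝ E * μ.real (ball 0 1) * ((1 + r) ^ (finrank ℝ E - q) / (q - finrank ℝ E)) := by
  have hball : (closedBall (0 : E) r)ᶜ = (‖·‖) ⁻¹' Ioi r := by ext; simp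
  have hp : (finrank ℝ E : ℝ) - 1 - q < -1 := by linarith
  rw [hball, setIntegral_fun_norm_addHaar μ (fun t => (1 + t) ^ (-q)) measurableSet_Ioi,
    Ioi_inter_Ioi, sup_eq_right.2 hr]
  refine mul_le_mul_of_nonneg_left ?_ (by positivity)
  calc ∫ t in Ioi r, t ^ (finrank ℝ E - 1) * (1 + t) ^ (-q)
      ≤ ∫ t in Ioi r, (1 + t) ^ ((finrank ℝ E : ℝ) - 1 - q) :=
        integral_mono_of_nonneg (ae_restrict_of_forall_mem measurableSet_Ioi fun t ht => ?_)
          (integrableOn_Ioi_one_add_rpow hp (by linarith))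
          (ae_restrict_of_forall_mem measurableSet_Ioi fun t ht =>
            pow_pred_mul_one_add_rpow_neg_le finrank_pos (hr.trans ht.out.le) q)
    _ = (1 + r) ^ (finrank ℝ E - q) / (q - finrank ℝ E) := by
        rw [integral_Ioi_one_add_rpow hp hr,
          show (finrank ℝ E : ℝ) - 1 - q + 1 = finrank ℝ E - q by ring, neg_sub]
  have := hr.trans ht.out.le
  positivity

lemma setIntegral_closedBall_one_add_norm_rpow_neg_le {b r : ℝ}
    (hb : b ≤ finrank ℝ E) (hr : 0 ≤ r) :
    ∫ y in closedBall (0 : E) r, (1 + ‖y‖) ^ (-b) ∂μ ≤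
      (1 + r) ^ (finrank ℝ E - b) * (finrank ℝ E * μ.real (ball 0 1) * log (1 + r)) := by
  calc ∫ y in closedBall (0 : E) r, (1 + ‖y‖) ^ (-b) ∂μ
      ≤ ∫ y in closedBall (0 : E) r,
          (1 + r) ^ (finrank ℝ E - b) * (1 + ‖y‖) ^ (-(finrank ℝ E : ℝ)) ∂μ := by
        refine integral_mono_of_nonneg (ae_of_all _ fun y => by positivity)
          (ContinuousOn.integrableOn_compact (isCompact_closedBall 0 r)
            (continuous_const.mul (continuous_one_add_norm_rpow _)).continuousOn)
          (ae_restrict_of_forall_mem measurableSet_closedBall fun y hy => ?_)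
        have hy : ‖y‖ ≤ r := mem_closedBall_zero_iff.1 hy
        calc (1 + ‖y‖) ^ (-b)
            = (1 + ‖y‖) ^ (finrank ℝ E - b) * (1 + ‖y‖) ^ (-(finrank ℝ E : ℝ)) := by
              rw [← rpow_add (by positivity)]; ring_nf
          _ ≤ (1 + r) ^ (finrank ℝ E - b) * (1 + ‖y‖) ^ (-(finrank ℝ E : ℝ)) := by
              gcongr
    _ ≤ (1 + r) ^ (finrank ℝ E - b) * (finrank ℝ E * μ.real (ball 0 1) * log (1 + r)) := by
        rw [integral_const_mul]
        gcongr
        exact setIntegral_closedBall_one_add_norm_rpow_neg_finrank_le μ hr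

lemma integral_indicator_closedBall_half_le (b : ℝ) (x : E) :
    ∫ y, (closedBall 0 (‖x‖ / 2)).indicator
        (fun z => 2 ^ b * (1 + ‖x‖) ^ (-b) * (1 + ‖z‖) ^ (-(finrank ℝ E : ℝ))) y ∂μ ≤
      2 ^ b * (finrank ℝ E * μ.real (ball 0 1)) * decayBound (finrank ℝ E) b ‖x‖ := by
  have hR := norm_nonneg x
  rw [integral_indicator measurableSet_closedBall, integral_const_mul]
  calc 2 ^ b * (1 + ‖x‖) ^ (-b) * ∫ z in closedBall 0 (‖x‖ / 2),
        (1 + ‖z‖) ^ (-(finrank ℝ E : ℝ)) ∂μ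
      ≤ 2 ^ b * (1 + ‖x‖) ^ (-b) *
          (finrank ℝ E * μ.real (ball 0 1) * log (exp 1 + ‖x‖)) := by
        gcongr
        exact (setIntegral_closedBall_one_add_norm_rpow_neg_finrank_le μ (by positivity)).trans
          (mul_le_mul_of_nonneg_left (log_one_add_half_le_log_exp_one_add hR) (by positivity))
    _ = 2 ^ b * (finrank ℝ E * μ.real (ball 0 1)) * (log (exp 1 + ‖x‖) * (1 + ‖x‖) ^ (-b)) := by
        ring
    _ ≤ _ := by gcongr; exact log_mul_rpow_neg_le_decayBound hR

lemma exists_rpow_neg_finrank_mul_setIntegral_closedBall_le (b : ℝ) :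
    ∃ D, ∀ R, 0 ≤ R → (1 + R) ^ (-(finrank ℝ E : ℝ)) *
      ∫ z in closedBall (0 : E) (R / 2), (1 + ‖z‖) ^ (-b) ∂μ ≤
        D * decayBound (finrank ℝ E) b R := by
  rcases le_or_gt b (finrank ℝ E) with hb | hb
  · refine ⟨finrank ℝ E * μ.real (ball 0 1), fun R hR => ?_⟩
    calc (1 + R) ^ (-(finrank ℝ E : ℝ)) * ∫ z in closedBall (0 : E) (R / 2), (1 + ‖z‖) ^ (-b) ∂μ
        ≤ (1 + R) ^ (-(finrank ℝ E : ℝ)) * ((1 + R) ^ (finrank ℝ E - b) *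
            (finrank ℝ E * μ.real (ball 0 1) * log (exp 1 + R))) := by
          gcongr
          have hlog := log_nonneg (by linarith : 1 ≤ 1 + R / 2)
          refine (setIntegral_closedBall_one_add_norm_rpow_neg_le μ hb (by positivity)).trans
            (mul_le_mul (rpow_le_rpow (by positivity) (by linarith) (by linarith))
              (mul_le_mul_of_nonneg_left (log_one_add_half_le_log_exp_one_add hR) (by positivity))
              (by positivity) (by positivity))
      _ = finrank ℝ E * μ.real (ball 0 1) * (log (exp 1 + R) * (1 + R) ^ (-b)) := by
          rw [← mul_assoc, ← rpow_add (by positivity)]; ring_nf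
      _ ≤ _ := by gcongr; exact log_mul_rpow_neg_le_decayBound hR
  · refine ⟨∫ z, (1 + ‖z‖) ^ (-b) ∂μ, fun R hR => ?_⟩
    have hJ : ∫ z in closedBall (0 : E) (R / 2), (1 + ‖z‖) ^ (-b) ∂μ ≤ ∫ z, (1 + ‖z‖) ^ (-b) ∂μ :=
      setIntegral_le_integral (integrable_one_add_norm hb) (ae_of_all _ fun z => by positivity)
    calc _ ≤ (1 + R) ^ (-(finrank ℝ E : ℝ)) * ∫ z, (1 + ‖z‖) ^ (-b) ∂μ := by gcongr
      _ ≤ _ := by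
        rw [mul_comm]
        gcongr
        exact rpow_neg_fst_le_decayBound hR

lemma exists_integral_indicator_closedBall_half_sub_le (b : ℝ) :
    ∃ K, ∀ x : E, ∫ y, (closedBall 0 (‖x‖ / 2)).indicator (fun z =>
        2 ^ (finrank ℝ E : ℝ) * (1 + ‖x‖) ^ (-(finrank ℝ E : ℝ)) * (1 + ‖z‖) ^ (-b)) (x - y) ∂μ ≤
      K * decayBound (finrank ℝ E) b ‖x‖ := by
  obtain ⟨D, hD⟩ := exists_rpow_neg_finrank_mul_setIntegral_closedBall_le μ b
  refine ⟨2 ^ (finrank ℝ E : ℝ) * D, fun x => ?_⟩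
  rw [integral_sub_left_eq_self _ μ x, integral_indicator measurableSet_closedBall,
    integral_const_mul, mul_assoc, mul_assoc]
  exact mul_le_mul_of_nonneg_left (hD ‖x‖ (norm_nonneg x)) (by positivity)

lemma integral_indicator_compl_closedBall_half_le {b : ℝ} (hb : 0 < b) (x : E) :
    ∫ y, (closedBall 0 (‖x‖ / 2))ᶜ.indicator
        (fun z => 3 ^ b * (1 + ‖z‖) ^ (-(finrank ℝ E + b))) y ∂μ ≤
      3 ^ b * 2 ^ b * (finrank ℝ E * μ.real (ball 0 1)) / b *
        decayBound (finrank ℝ E) b ‖x‖ := by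
  have hR := norm_nonneg x
  have hhalf : (1 + ‖x‖ / 2) ^ (-b) ≤ 2 ^ b * (1 + ‖x‖) ^ (-b) :=
    rpow_neg_le_mul_rpow_neg (by positivity) two_pos hb.le (by linarith)
  rw [integral_indicator measurableSet_closedBall.compl, integral_const_mul]
  calc 3 ^ b * ∫ z in (closedBall 0 (‖x‖ / 2))ᶜ, (1 + ‖z‖) ^ (-(finrank ℝ E + b)) ∂μ
      ≤ 3 ^ b * (finrank ℝ E * μ.real (ball 0 1) * ((1 + ‖x‖ / 2) ^ (-b) / b)) := by
        gcongr
        refine (setIntegral_compl_closedBall_one_add_norm_rpow_neg_le μ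
          (by linarith : (finrank ℝ E : ℝ) < finrank ℝ E + b) (by positivity)).trans_eq ?_
        rw [sub_add_cancel_left, add_sub_cancel_left]
    _ ≤ 3 ^ b * (finrank ℝ E * μ.real (ball 0 1) * (2 ^ b * (1 + ‖x‖) ^ (-b) / b)) := by
        gcongr
    _ = 3 ^ b * 2 ^ b * (finrank ℝ E * μ.real (ball 0 1)) / b * (1 + ‖x‖) ^ (-b) := by ring
    _ ≤ _ := by gcongr; exact rpow_neg_snd_le_decayBound hR

theorem exists_integral_one_add_norm_rpow_mul_le {b : ℝ} (hb : 0 < b) :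
    ∃ C > 0, ∀ x : E, ∫ y, (1 + ‖y‖) ^ (-(finrank ℝ E : ℝ)) * (1 + ‖x - y‖) ^ (-b) ∂μ ≤
      C * decayBound (finrank ℝ E) b ‖x‖ := by
  obtain ⟨K, hK⟩ := exists_integral_indicator_closedBall_half_sub_le μ b
  set C := 2 ^ b * (finrank ℝ E * μ.real (ball 0 1)) + K +
    3 ^ b * 2 ^ b * (finrank ℝ E * μ.real (ball 0 1)) / b
  refine ⟨max C 1, by positivity, fun x => ?_⟩
  have hn : (0 : ℝ) ≤ finrank ℝ E := by positivity
  have h₁ := integrable_indicator_closedBall_mul_one_add_norm_rpow μ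
    (2 ^ b * (1 + ‖x‖) ^ (-b)) (-(finrank ℝ E : ℝ)) (‖x‖ / 2)
  have h₂ := (integrable_indicator_closedBall_mul_one_add_norm_rpow μ
    (2 ^ (finrank ℝ E : ℝ) * (1 + ‖x‖) ^ (-(finrank ℝ E : ℝ))) (-b) (‖x‖ / 2)).comp_sub_left x
  have h₃ := ((integrable_one_add_norm (μ := μ) (r := finrank ℝ E + b) (by linarith)).const_mul
    (3 ^ b)).indicator (measurableSet_closedBall (x := 0) (ε := ‖x‖ / 2)).compl
  refine (integral_mono_of_nonneg (ae_of_all _ fun y => by positivity) ((h₁.add h₂).add h₃)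
    (ae_of_all _ (one_add_norm_rpow_mul_le_indicators hn hb.le x))).trans ?_
  rw [integral_add' (h₁.add h₂) h₃, integral_add' h₁ h₂]
  calc _ ≤ C * decayBound (finrank ℝ E) b ‖x‖ := by
        linarith [integral_indicator_closedBall_half_le μ b x, hK x,
          integral_indicator_compl_closedBall_half_le μ hb x]
    _ ≤ max C 1 * decayBound (finrank ℝ E) b ‖x‖ := by
        gcongr
        · exact decayBound_nonneg (norm_nonneg x)
        · exact le_max_left _ _

end Haar

theorem stmt1_general (a b : ℝ) (hab : 2 < a + b) (ha2 : a = 2) :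
    ∃ C : ℝ, 0 < C ∧ ∀ x : EuclideanSpace ℝ (Fin 2),
      (∫ y : EuclideanSpace ℝ (Fin 2), (1 + ‖y‖) ^ (-a) * (1 + ‖x - y‖) ^ (-b))
        ≤ C * ((1 + ‖x‖) ^ (-(2:ℝ)) +
            Real.log (Real.exp 1 + ‖x‖) * (1 + ‖x‖) ^ (-(a + b - 2))) := by
  subst ha2
  obtain ⟨C, hC, hbound⟩ :=
    exists_integral_one_add_norm_rpow_mul_le volume (E := EuclideanSpace ℝ (Fin 2))
      (by linarith : 0 < b)
  refine ⟨C, hC, fun x => ?_⟩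
  simpa [finrank_euclideanSpace_fin, decayBound] using hbound x

/-- For `a, b ≥ 0` with `a + b > 2` and `a = 2`, there is `C > 0` with
`∫ (1+|y|)^{-a} (1+|x−y|)^{-b} dy ≤ C ((1+|x|)^{-2} + log(e+|x|) (1+|x|)^{-(a+b−2)})`
for all `x ∈ ℝ²`. -/
theorem stmt1 (a b : ℝ) (ha : 0 ≤ a) (hb : 0 ≤ b) (hab : 2 < a + b) (ha2 : a = 2) :
    ∃ C : ℝ, 0 < C ∧ ∀ x : EuclideanSpace ℝ (Fin 2),
      (∫ y : EuclideanSpace ℝ (Fin 2), (1 + ‖y‖) ^ (-a) * (1 + ‖x - y‖) ^ (-b))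
        ≤ C * ((1 + ‖x‖) ^ (-(2:ℝ)) +
            Real.log (Real.exp 1 + ‖x‖) * (1 + ‖x‖) ^ (-(a + b - 2))) :=
  stmt1_general a b hab ha2
end

section
/- Let K₁ ⊆ ℝ² be a nonempty compact convex set, B ⊆ ℝ² a bounded set, and O ⊆ 𝕊¹ an open subset of the unit circle. Define 𝒞(O) := ⋂_{ŵ ∈ O} (K₁ + ℝŵ), where K₁ + ℝŵ := { x + tŵ : x ∈ K₁, t ∈ ℝ }. Then 𝒞(O) is closed and convex, and if O contains at least two linearly independent directions then 𝒞(O) is compact. -/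
/-!
With `π : E → E ⧸ ℝw` the quotient map, the cylinder `K + ℝw` is `π⁻¹(π K)`. For independent
`w₁, w₂` the map `E → E ⧸ ℝw₁ × E ⧸ ℝw₂` is injective, hence a closed embedding in finite
dimension, so `(K + ℝw₁) ∩ (K + ℝw₂)` is the preimage of the compact set `π₁ K × π₂ K`, and the
closed set `⋂ (K + ℝw)` sits inside it.
-/

open Set Pointwise

/-- The cylinder (slab) `K + ℝŵ` generated by translating `K` along the line `ℝŵ`. -/
def cylinder (K : Set (EuclideanSpace ℝ (Fin 2))) (w : EuclideanSpace ℝ (Fin 2)) :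
    Set (EuclideanSpace ℝ (Fin 2)) :=
  {x | ∃ k ∈ K, ∃ t : ℝ, x = k + t • w}

theorem Submodule.add_eq_preimage_mkQ_image {R M : Type*} [Ring R] [AddCommGroup M] [Module R M]
    (K : Set M) (P : Submodule R M) : K + (P : Set M) = P.mkQ ⁻¹' (P.mkQ '' K) := by
  ext x
  simp only [mem_add, SetLike.mem_coe, mem_preimage, mem_image, mkQ_apply,
    Quotient.eq]
  constructor
  · rintro ⟨k, hk, p, hp, rfl⟩
    exact ⟨k, hk, by simpa using P.neg_mem hp⟩
  · rintro ⟨k, hk, hkx⟩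
    exact ⟨k, hk, x - k, by simpa using P.neg_mem hkx, add_sub_cancel k x⟩

theorem IsCompact.inter_add_submodule {𝕜 E : Type*} [NontriviallyNormedField 𝕜] [CompleteSpace 𝕜]
    [AddCommGroup E] [TopologicalSpace E] [IsTopologicalAddGroup E] [Module 𝕜 E]
    [ContinuousSMul 𝕜 E] [T2Space E] [FiniteDimensional 𝕜 E] {K : Set E} (hK : IsCompact K)
    {P Q : Submodule 𝕜 E} (hPQ : P ⊓ Q = ⊥) : IsCompact ((K + (P : Set E)) ∩ (K + (Q : Set E))) := by
  have : IsClosed (P : Set E) := P.closed_of_finiteDimensional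
  have : IsClosed (Q : Set E) := Q.closed_of_finiteDimensional
  have hf : Topology.IsClosedEmbedding (P.mkQ.prod Q.mkQ) :=
    LinearMap.isClosedEmbedding_of_injective (by
      rw [LinearMap.ker_prod, Submodule.ker_mkQ, Submodule.ker_mkQ, hPQ])
  rw [P.add_eq_preimage_mkQ_image, Q.add_eq_preimage_mkQ_image]
  exact hf.isCompact_preimage ((hK.image P.continuous_mkQ).prod (hK.image Q.continuous_mkQ))

theorem LinearIndependent.span_singleton_inf_span_singleton {R M : Type*} [Ring R] [AddCommGroup M]
    [Module R M] {x y : M}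
    (h : LinearIndependent R ![x, y]) : (R ∙ x) ⊓ (R ∙ y) = ⊥ := by
  have := h.disjoint_span_image (s := {0}) (t := {1}) (by simp)
  simpa [image_singleton, disjoint_iff] using this

theorem cylinder_eq_add_span (K : Set (EuclideanSpace ℝ (Fin 2))) (w : EuclideanSpace ℝ (Fin 2)) :
    cylinder K w = K + ((ℝ ∙ w : Submodule ℝ _) : Set (EuclideanSpace ℝ (Fin 2))) := by
  ext x
  simp only [cylinder, mem_ofPred_eq, mem_add, SetLike.mem_coe, Submodule.mem_span_singleton]
  constructor
  · rintro ⟨k, hk, t, rfl⟩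
    exact ⟨k, hk, t • w, ⟨t, rfl⟩, rfl⟩
  · rintro ⟨k, hk, _, ⟨t, rfl⟩, rfl⟩
    exact ⟨k, hk, t, rfl⟩

section

variable {K : Set (EuclideanSpace ℝ (Fin 2))}

theorem isClosed_cylinder (hK : IsCompact K) (w : EuclideanSpace ℝ (Fin 2)) :
    IsClosed (cylinder K w) := by
  rw [cylinder_eq_add_span]
  exact (Submodule.closed_of_finiteDimensional _).add_left_of_isCompact hK

theorem convex_cylinder (hK : Convex ℝ K) (w : EuclideanSpace ℝ (Fin 2)) :
    Convex ℝ (cylinder K w) := by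
  rw [cylinder_eq_add_span]
  exact hK.add (Submodule.convex _)

theorem isCompact_cylinder_inter_cylinder (hK : IsCompact K) {w₁ w₂ : EuclideanSpace ℝ (Fin 2)}
    (h : LinearIndependent ℝ ![w₁, w₂]) : IsCompact (cylinder K w₁ ∩ cylinder K w₂) := by
  rw [cylinder_eq_add_span, cylinder_eq_add_span]
  exact hK.inter_add_submodule h.span_singleton_inf_span_singleton

end

theorem stmt10_general (K₁ : Set (EuclideanSpace ℝ (Fin 2)))
    (hK₁cpt : IsCompact K₁) (hK₁conv : Convex ℝ K₁)
    (O : Set (EuclideanSpace ℝ (Fin 2))) :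
    IsClosed (⋂ w ∈ O, cylinder K₁ w) ∧
    Convex ℝ (⋂ w ∈ O, cylinder K₁ w) ∧
    ((∃ w₁ ∈ O, ∃ w₂ ∈ O, LinearIndependent ℝ ![w₁, w₂]) →
      IsCompact (⋂ w ∈ O, cylinder K₁ w)) := by
  have hclosed : IsClosed (⋂ w ∈ O, cylinder K₁ w) :=
    isClosed_biInter fun w _ => isClosed_cylinder hK₁cpt w
  refine ⟨hclosed, convex_iInter₂ fun w _ => convex_cylinder hK₁conv w, ?_⟩
  rintro ⟨w₁, hw₁, w₂, hw₂, hli⟩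
  exact (isCompact_cylinder_inter_cylinder hK₁cpt hli).of_isClosed_subset hclosed
    (subset_inter (biInter_subset_of_mem hw₁) (biInter_subset_of_mem hw₂))

/-- for `K₁` nonempty compact convex, `B` bounded and `O` open in `𝕊¹`, the set
`𝒞(O) = ⋂_{ŵ ∈ O} (K₁ + ℝŵ)` is closed and convex, and compact if `O` contains two
linearly independent directions. -/
theorem stmt10 (K₁ : Set (EuclideanSpace ℝ (Fin 2)))
    (hK₁ne : K₁.Nonempty) (hK₁cpt : IsCompact K₁) (hK₁conv : Convex ℝ K₁)
    (B : Set (EuclideanSpace ℝ (Fin 2))) (hB : Bornology.IsBounded B)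
    (O : Set (EuclideanSpace ℝ (Fin 2))) (hOsub : O ⊆ Metric.sphere 0 1)
    (hOopen : ∃ U : Set (EuclideanSpace ℝ (Fin 2)), IsOpen U ∧ O = U ∩ Metric.sphere 0 1) :
    IsClosed (⋂ w ∈ O, cylinder K₁ w) ∧
    Convex ℝ (⋂ w ∈ O, cylinder K₁ w) ∧
    ((∃ w₁ ∈ O, ∃ w₂ ∈ O, LinearIndependent ℝ ![w₁, w₂]) →
      IsCompact (⋂ w ∈ O, cylinder K₁ w)) :=
  stmt10_general K₁ hK₁cpt hK₁conv O
end

section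
/- Let K₁ ⊆ ℝ² be a compact convex set and S ⊆ 𝕊¹ a dense subset of the unit circle. Then K₁ = ⋂_{v̂ ∈ S} (K₁ + ℝv̂), where K₁ + ℝv̂ := { x + t v̂ : x ∈ K₁, t ∈ ℝ }. -/
/-!
If `x ∉ K`, a functional separating `x` from `K` has a unit vector `v₀` in its kernel, and `x`
does not lie on `K + ℝv₀`. On the other hand, compactness of `K` makes the set of unit directions
`v` with `x ∈ K + ℝv` closed; if it contained the dense set `S` it would contain `v₀`.
-/

open Set

/-- The cylinder (slab) `K + ℝv̂` generated by translating `K` along the line `ℝv̂`. -/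
def cylinder' (K : Set (EuclideanSpace ℝ (Fin 2))) (v : EuclideanSpace ℝ (Fin 2)) :
    Set (EuclideanSpace ℝ (Fin 2)) :=
  {x | ∃ k ∈ K, ∃ t : ℝ, x = k + t • v}

open Filter Topology Module

section

variable {E : Type*} [NormedAddCommGroup E] [NormedSpace ℝ E]

theorem IsCompact.isClosed_setOf_unit_add_smul_eq {K : Set E} (hK : IsCompact K) (x : E) :
    IsClosed {v ∈ Metric.sphere (0 : E) 1 | ∃ k ∈ K, ∃ t : ℝ, x = k + t • v} := by
  obtain ⟨R, hR⟩ := isBounded_iff_forall_norm_le.1 (hK.image (continuous_sub_left x)).isBounded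
  refine IsSeqClosed.isClosed fun v v₀ hv hlim => ?_
  choose hv_unit k hk t ht using hv
  have hkt : ∀ n, (k n, t n) ∈ K ×ˢ Icc (-R) R := fun n => by
    have hnorm : ‖t n • v n‖ = ‖x - k n‖ := by rw [ht n, add_sub_cancel_left]
    rw [norm_smul, mem_sphere_zero_iff_norm.1 (hv_unit n), mul_one, Real.norm_eq_abs] at hnorm
    exact ⟨hk n, abs_le.1 (hnorm ▸ hR _ (mem_image_of_mem _ (hk n)))⟩
  obtain ⟨⟨k₀, t₀⟩, ⟨hk₀, -⟩, φ, hφ, hlim_kt⟩ := (hK.prod isCompact_Icc).tendsto_subseq hkt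
  refine ⟨Metric.isClosed_sphere.mem_of_tendsto hlim (Eventually.of_forall hv_unit), k₀, hk₀, t₀, ?_⟩
  have hlim_x : Tendsto (fun n => k (φ n) + t (φ n) • v (φ n)) atTop (𝓝 (k₀ + t₀ • v₀)) :=
    (continuous_fst.tendsto _).comp hlim_kt |>.add <|
      ((continuous_snd.tendsto _).comp hlim_kt).smul (hlim.comp hφ.tendsto_atTop)
  simp only [← ht] at hlim_x
  exact tendsto_nhds_unique tendsto_const_nhds hlim_x

theorem Convex.exists_unit_forall_add_smul_ne [FiniteDimensional ℝ E] (hE : 1 < finrank ℝ E)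
    {K : Set E} (hKconv : Convex ℝ K) (hKclosed : IsClosed K) {x : E} (hx : x ∉ K) :
    ∃ v ∈ Metric.sphere (0 : E) 1, ∀ k ∈ K, ∀ t : ℝ, x ≠ k + t • v := by
  obtain ⟨f, u, hfK, hfx⟩ := geometric_hahn_banach_closed_point hKconv hKclosed hx
  obtain ⟨w, hw_ker, hw⟩ := Submodule.exists_mem_ne_zero_of_ne_bot <|
    (f : E →ₗ[ℝ] ℝ).ker_ne_bot_of_finrank_lt (by rwa [finrank_self])
  refine ⟨‖w‖⁻¹ • w, by simp [norm_smul, hw], fun k hk t hxk => ?_⟩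
  have hfw : f w = 0 := hw_ker
  have : f x = f k := by simp [hxk, hfw]
  linarith [hfK k hk]

end

/-- a compact convex `K₁ ⊆ ℝ²` is the intersection of its cylinders along a
dense set `S` of directions of the unit circle. -/
theorem stmt11 (K₁ : Set (EuclideanSpace ℝ (Fin 2)))
    (hK₁cpt : IsCompact K₁) (hK₁conv : Convex ℝ K₁)
    (S : Set (EuclideanSpace ℝ (Fin 2))) (hSsub : S ⊆ Metric.sphere 0 1)
    (hSdense : Metric.sphere (0 : EuclideanSpace ℝ (Fin 2)) 1 ⊆ closure S) :
    K₁ = ⋂ v ∈ S, cylinder' K₁ v := by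
  refine Subset.antisymm (fun x hx => mem_iInter₂.2 fun v _ => ⟨x, hx, 0, by simp⟩) ?_
  intro x hx
  by_contra hxK
  obtain ⟨v, hv_unit, hv⟩ := hK₁conv.exists_unit_forall_add_smul_ne
    (by simp) hK₁cpt.isClosed hxK
  have hclosure_sub : closure S ⊆ {v ∈ Metric.sphere 0 1 | x ∈ cylinder' K₁ v} :=
    closure_minimal (fun w hw => ⟨hSsub hw, mem_iInter₂.1 hx w hw⟩)
      (hK₁cpt.isClosed_setOf_unit_add_smul_eq x)
  obtain ⟨k, hk, t, hxkt⟩ := (hclosure_sub (hSdense hv_unit)).2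
  exact hv k hk t hxkt
end

section
/- Let h : ℝ² → ℝ be continuous with compact support, and define the transversal gauge A_T(x) := −x × ∫₀¹ τ h(τx) dτ, where for a scalar s ∈ ℝ and w ∈ ℝ², w × s := (s w₂, −s w₁). If h is C¹, then A_T is C¹ on ℝ² and ∂₁(A_T)₂ − ∂₂(A_T)₁ = h on ℝ². -/
open MeasureTheory

/-- The transversal gauge `A_T(x) := −x × ∫₀¹ τ h(τx) dτ`, where for `w ∈ ℝ²`, `s ∈ ℝ`,
`w × s := (s w₂, −s w₁)`; explicitly `A_T(x) = (−s x₂, s x₁)` with `s = ∫₀¹ τ h(τx) dτ`. -/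
noncomputable def transversalGauge (h : (Fin 2 → ℝ) → ℝ) (x : Fin 2 → ℝ) : Fin 2 → ℝ :=
  ![-(∫ τ in (0:ℝ)..1, τ * h (τ • x)) * x 1, (∫ τ in (0:ℝ)..1, τ * h (τ • x)) * x 0]

open Set

/-!
Write `A_T(x) = (-s(x) x₂, s(x) x₁)` with `s(x) = ∫₀¹ τ h(τx) dτ`. Since `τ` ranges over a compact
interval, `s` is `C¹` by differentiation under the integral sign. The curl of `A_T` is
`2 s + x · ∇s`, and `x · ∇s(x) = ∫₀¹ τ² ∇h(τx) · x dτ`, so the curl equals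
`∫₀¹ d/dτ (τ² h(τx)) dτ = h(x)`.
-/

section ParametricIntegral

variable {H E : Type*} [NormedAddCommGroup H] [NormedSpace ℝ H]
  [NormedAddCommGroup E] [NormedSpace ℝ E]
  {F : H → ℝ → E} {F' : H → ℝ → H →L[ℝ] E} {a b : ℝ}

theorem hasFDerivAt_intervalIntegral_of_continuous
    (hF : Continuous (Function.uncurry F)) (hF' : Continuous (Function.uncurry F'))
    (hderiv : ∀ x τ, HasFDerivAt (F · τ) (F' x τ) x) (x₀ : H) :
    HasFDerivAt (fun x => ∫ τ in a..b, F x τ) (∫ τ in a..b, F' x₀ τ) x₀ := by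
  obtain ⟨C, hC⟩ : ∃ C, ∀ p ∈ ({x₀} : Set H) ×ˢ uIcc a b, ‖Function.uncurry F' p‖ ≤ C :=
    (isCompact_singleton.prod isCompact_uIcc).exists_bound_of_continuousOn hF'.continuousOn
  obtain ⟨U, V, hU, -, hx₀U, hV, hUV⟩ := generalized_tube_lemma isCompact_singleton isCompact_uIcc
    (isOpen_lt hF'.norm continuous_const) fun p hp => (hC p hp).trans_lt (lt_add_one C)
  have hFx : ∀ x, Continuous (F x) := fun x => hF.comp (Continuous.prodMk_right x)
  exact intervalIntegral.hasFDerivAt_integral_of_dominated_of_fderiv_le (bound := fun _ => C + 1)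
    (hU.mem_nhds (hx₀U rfl))
    (Filter.Eventually.of_forall fun x => (hFx x).aestronglyMeasurable)
    ((hFx x₀).intervalIntegrable a b)
    (hF'.comp (Continuous.prodMk_right x₀)).aestronglyMeasurable
    (ae_of_all _ fun τ hτ x hx => (@hUV (x, τ) ⟨hx, hV (uIoc_subset_uIcc hτ)⟩).le)
    intervalIntegrable_const
    (ae_of_all _ fun τ _ x _ => hderiv x τ)

theorem contDiff_one_intervalIntegral_of_continuous
    (hF : Continuous (Function.uncurry F)) (hF' : Continuous (Function.uncurry F'))
    (hderiv : ∀ x τ, HasFDerivAt (F · τ) (F' x τ) x) :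
    ContDiff ℝ 1 (fun x => ∫ τ in a..b, F x τ) := by
  have hasDeriv := hasFDerivAt_intervalIntegral_of_continuous (a := a) (b := b) hF hF' hderiv
  rw [contDiff_one_iff_fderiv]
  refine ⟨fun x => (hasDeriv x).differentiableAt, ?_⟩
  rw [funext fun x => (hasDeriv x).fderiv]
  exact intervalIntegral.continuous_parametric_intervalIntegral_of_continuous' hF' a b

end ParametricIntegral

section RadialMoment

variable {E : Type*} [NormedAddCommGroup E] [NormedSpace ℝ E] {h : E → ℝ}

noncomputable def radialMoment (h : E → ℝ) (x : E) : ℝ := ∫ τ in (0:ℝ)..1, τ * h (τ • x)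

theorem hasFDerivAt_mul_comp_smul (hh : Differentiable ℝ h) (τ : ℝ) (x : E) :
    HasFDerivAt (fun y => τ * h (τ • y)) ((τ ^ 2) • fderiv ℝ h (τ • x)) x := by
  refine (((hh (τ • x)).hasFDerivAt.comp x ((hasFDerivAt_id x).const_smul τ)).const_mul τ
    ).congr_fderiv ?_
  ext v
  simp [pow_two, mul_assoc]

theorem continuous_uncurry_sq_smul_fderiv_comp_smul (hh : ContDiff ℝ 1 h) :
    Continuous (Function.uncurry fun (x : E) (τ : ℝ) => (τ ^ 2) • fderiv ℝ h (τ • x)) :=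
  (continuous_snd.pow 2).smul
    ((hh.continuous_fderiv one_ne_zero).comp (continuous_snd.smul continuous_fst))

theorem continuous_uncurry_mul_comp_smul (hh : Continuous h) :
    Continuous (Function.uncurry fun (x : E) (τ : ℝ) => τ * h (τ • x)) :=
  continuous_snd.mul (hh.comp (continuous_snd.smul continuous_fst))

theorem hasFDerivAt_radialMoment (hh : ContDiff ℝ 1 h) (x : E) :
    HasFDerivAt (radialMoment h) (∫ τ in (0:ℝ)..1, (τ ^ 2) • fderiv ℝ h (τ • x)) x :=
  hasFDerivAt_intervalIntegral_of_continuous (continuous_uncurry_mul_comp_smul hh.continuous)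
    (continuous_uncurry_sq_smul_fderiv_comp_smul hh)
    (fun y τ => hasFDerivAt_mul_comp_smul (hh.differentiable one_ne_zero) τ y) x

theorem contDiff_radialMoment (hh : ContDiff ℝ 1 h) : ContDiff ℝ 1 (radialMoment h) :=
  contDiff_one_intervalIntegral_of_continuous (continuous_uncurry_mul_comp_smul hh.continuous)
    (continuous_uncurry_sq_smul_fderiv_comp_smul hh)
    (fun y τ => hasFDerivAt_mul_comp_smul (hh.differentiable one_ne_zero) τ y)

theorem two_mul_radialMoment_add_fderiv_apply_self (hh : ContDiff ℝ 1 h) (x : E) :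
    2 * radialMoment h x + fderiv ℝ (radialMoment h) x x = h x := by
  have hF : Continuous fun τ : ℝ => τ * h (τ • x) :=
    (continuous_uncurry_mul_comp_smul hh.continuous).comp (Continuous.prodMk_right x)
  have h2F : Continuous fun τ : ℝ => 2 * (τ * h (τ • x)) := continuous_const.mul hF
  have hF' : Continuous fun τ : ℝ => τ ^ 2 • fderiv ℝ h (τ • x) :=
    (continuous_uncurry_sq_smul_fderiv_comp_smul hh).comp (Continuous.prodMk_right x)
  have hF'x : Continuous fun τ : ℝ => (τ ^ 2 • fderiv ℝ h (τ • x)) x :=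
    hF'.clm_apply continuous_const
  have hderiv : ∀ τ : ℝ, HasDerivAt (fun τ : ℝ => τ ^ 2 * h (τ • x))
      (2 * (τ * h (τ • x)) + (τ ^ 2 • fderiv ℝ h (τ • x)) x) τ := fun τ => by
    have hsmul : HasDerivAt (fun τ : ℝ => τ • x) x τ := by
      simpa using (hasDerivAt_id τ).smul_const x
    have hcomp : HasDerivAt (fun τ : ℝ => h (τ • x)) (fderiv ℝ h (τ • x) x) τ :=
      ((hh.differentiable one_ne_zero) (τ • x)).hasFDerivAt.comp_hasDerivAt τ hsmul
    refine ((hasDerivAt_pow 2 τ).mul hcomp).congr_deriv ?_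
    simp only [FunLike.coe_smul, Pi.smul_apply, smul_eq_mul]
    ring
  rw [(hasFDerivAt_radialMoment hh x).fderiv,
    ContinuousLinearMap.intervalIntegral_apply (hF'.intervalIntegrable 0 1), radialMoment,
    ← intervalIntegral.integral_const_mul, ← intervalIntegral.integral_add
      (h2F.intervalIntegrable 0 1) (hF'x.intervalIntegrable 0 1),
    intervalIntegral.integral_eq_sub_of_hasDerivAt (fun τ _ => hderiv τ)
      ((h2F.add hF'x).intervalIntegrable 0 1)]
  simp

end RadialMoment

theorem ContinuousLinearMap.apply_eq_fin_two {M : Type*} [AddCommMonoid M] [Module ℝ M]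
    [TopologicalSpace M] (L : (Fin 2 → ℝ) →L[ℝ] M) (x : Fin 2 → ℝ) :
    L x = x 0 • L (Pi.single 0 1) + x 1 • L (Pi.single 1 1) := by
  have hx : x = x 0 • Pi.single 0 1 + x 1 • Pi.single 1 1 := by
    ext i; fin_cases i <;> simp
  conv_lhs => rw [hx]
  simp only [map_add, map_smul]

theorem transversalGauge_apply_zero (h : (Fin 2 → ℝ) → ℝ) (x : Fin 2 → ℝ) :
    transversalGauge h x 0 = -(radialMoment h x * x 1) := by
  simp [transversalGauge, radialMoment]

theorem transversalGauge_apply_one (h : (Fin 2 → ℝ) → ℝ) (x : Fin 2 → ℝ) :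
    transversalGauge h x 1 = radialMoment h x * x 0 := rfl

theorem stmt12_general (h : (Fin 2 → ℝ) → ℝ) (hC1 : ContDiff ℝ 1 h) :
    ContDiff ℝ 1 (transversalGauge h) ∧
    ∀ x : Fin 2 → ℝ,
      fderiv ℝ (fun y => transversalGauge h y 1) x (Pi.single 0 1)
        - fderiv ℝ (fun y => transversalGauge h y 0) x (Pi.single 1 1) = h x := by
  have hS := contDiff_radialMoment hC1
  simp_rw [contDiff_pi, Fin.forall_fin_two, transversalGauge_apply_zero,
    transversalGauge_apply_one]
  refine ⟨⟨(hS.mul (contDiff_apply ℝ ℝ 1)).neg, hS.mul (contDiff_apply ℝ ℝ 0)⟩, fun x => ?_⟩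
  have hSx := hS.differentiable one_ne_zero x
  rw [fderiv_fun_neg, fderiv_fun_mul hSx (differentiableAt_apply 1 x),
    fderiv_fun_mul hSx (differentiableAt_apply 0 x), (hasFDerivAt_apply 0 x).fderiv,
    (hasFDerivAt_apply 1 x).fderiv, ← two_mul_radialMoment_add_fderiv_apply_self hC1 x,
    ContinuousLinearMap.apply_eq_fin_two (fderiv ℝ (radialMoment h) x) x]
  simp only [add_apply, smul_apply, neg_apply, ContinuousLinearMap.proj_apply,
    Pi.single_eq_same, smul_eq_mul]
  ring

/-- for `h` continuous with compact support and `C¹`, the transversal gauge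
`A_T` is `C¹` on `ℝ²` and `∂₁(A_T)₂ − ∂₂(A_T)₁ = h`. -/
theorem stmt12 (h : (Fin 2 → ℝ) → ℝ) (hc : Continuous h) (hsupp : HasCompactSupport h)
    (hC1 : ContDiff ℝ 1 h) :
    ContDiff ℝ 1 (transversalGauge h) ∧
    ∀ x : Fin 2 → ℝ,
      fderiv ℝ (fun y => transversalGauge h y 1) x (Pi.single 0 1)
        - fderiv ℝ (fun y => transversalGauge h y 0) x (Pi.single 1 1) = h x :=
  stmt12_general h hC1
end

section
/- Let v̂ ∈ 𝕊¹ and let B : ℝ² → ℝ be continuous with |B(x)| ≤ C(1+|x|)^{-μ} for some μ > 2. For x ∈ ℝ² define η(x) := ∫_{−∞}^{∞} B(x + τ v̂) dτ. Then η is well-defined (the integral converges absolutely), η is continuous, η(x + s v̂) = η(x) for all s ∈ ℝ, and |η(x)| ≤ C' (1 + |x − (x·v̂)v̂|)^{1−μ} for some constant C'. -/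
/-!
Write `a = ⟪x, v⟫` and `P = ‖x - a • v‖`. By Pythagoras along the line, `P` and `|a + τ|` are both
at most `‖x + τ • v‖`, so `|B (x + τ • v)| ≤ C 2^μ (1 + P + |a + τ|)^(-μ)`. For `μ > 1` this
majorant is integrable in `τ`, and the substitution `t = (1 + P) s` shows its integral is
`(1 + P)^(1 - μ)` times `∫ (1 + |s|)^(-μ)`. Continuity follows by dominated convergence, since
`1 + ‖x₀ + τ • v‖ ≤ 2 (1 + ‖x + τ • v‖)` whenever `‖x - x₀‖ ≤ 1`; invariance is translation
invariance of Lebesgue measure on `ℝ`.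
-/

open MeasureTheory

open scoped RealInnerProductSpace

theorem rpow_neg_le_two_rpow_mul_rpow_neg {s t μ : ℝ} (hs : 0 < s) (hst : s ≤ 2 * t)
    (hμ : 0 ≤ μ) : t ^ (-μ) ≤ 2 ^ μ * s ^ (-μ) :=
  calc t ^ (-μ) ≤ (s / 2) ^ (-μ) :=
        Real.rpow_le_rpow_of_nonpos (by positivity) (by linarith) (by linarith)
    _ = 2 ^ μ * s ^ (-μ) := by
        rw [Real.div_rpow hs.le zero_le_two, Real.rpow_neg zero_le_two, div_inv_eq_mul, mul_comm]

theorem one_add_norm_rpow_neg_le_of_norm_sub_le {E : Type*} [SeminormedAddCommGroup E]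
    {μ : ℝ} {y z : E} (h : ‖y - z‖ ≤ 1) (hμ : 0 ≤ μ) :
    (1 + ‖y‖) ^ (-μ) ≤ 2 ^ μ * (1 + ‖z‖) ^ (-μ) := by
  refine rpow_neg_le_two_rpow_mul_rpow_neg (by positivity) ?_ hμ
  linarith [norm_le_norm_add_norm_sub' z y, norm_sub_rev y z, norm_nonneg y]

section Profile

variable {c μ : ℝ}

theorem add_abs_rpow_neg_eq (hc : 0 < c) (t : ℝ) :
    (c + |t|) ^ (-μ) = c ^ (-μ) * (1 + |c⁻¹ * t|) ^ (-μ) := by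
  rw [← Real.mul_rpow hc.le (by positivity), abs_mul, abs_inv, abs_of_pos hc, mul_add,
    mul_inv_cancel_left₀ hc.ne', mul_one]

theorem integrable_one_add_abs_rpow_neg (hμ : 1 < μ) :
    Integrable fun t : ℝ => (1 + |t|) ^ (-μ) := by
  simpa only [Real.norm_eq_abs] using
    integrable_one_add_norm (E := ℝ) (μ := volume) (r := μ) (by simpa using hμ)

theorem integrable_add_abs_rpow_neg (hc : 0 < c) (hμ : 1 < μ) :
    Integrable fun t : ℝ => (c + |t|) ^ (-μ) := by
  simp_rw [add_abs_rpow_neg_eq hc]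
  exact ((integrable_one_add_abs_rpow_neg hμ).comp_mul_left' (inv_ne_zero hc.ne')).const_mul _

theorem integral_add_abs_rpow_neg (hc : 0 < c) :
    ∫ t : ℝ, (c + |t|) ^ (-μ) = c ^ (1 - μ) * ∫ t : ℝ, (1 + |t|) ^ (-μ) := by
  simp_rw [add_abs_rpow_neg_eq hc]
  rw [integral_const_mul, Measure.integral_comp_inv_mul_left (fun t => (1 + |t|) ^ (-μ)),
    abs_of_pos hc, smul_eq_mul, ← mul_assoc, ← Real.rpow_add_one hc.ne', neg_add_eq_sub]

end Profile

section Line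

variable {E : Type*} [NormedAddCommGroup E] [InnerProductSpace ℝ E] {v : E}

theorem norm_sub_inner_smul_le (hv : ‖v‖ = 1) (y : E) : ‖y - ⟪y, v⟫ • v‖ ≤ ‖y‖ := by
  have hsq : ‖y - ⟪y, v⟫ • v‖ ^ 2 ≤ ‖y‖ ^ 2 := by
    rw [norm_sub_sq_real, real_inner_smul_right, norm_smul, Real.norm_eq_abs, hv, mul_one, sq_abs]
    nlinarith [sq_nonneg ⟪y, v⟫]
  exact (pow_le_pow_iff_left₀ (norm_nonneg _) (norm_nonneg _) two_ne_zero).mp hsq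

theorem inner_add_smul_of_norm_eq_one (hv : ‖v‖ = 1) (x : E) (τ : ℝ) :
    ⟪x + τ • v, v⟫ = ⟪x, v⟫ + τ := by
  rw [inner_add_left, real_inner_smul_left, real_inner_self_eq_norm_sq, hv, one_pow, mul_one]

theorem norm_sub_inner_smul_add_abs_le (hv : ‖v‖ = 1) (x : E) (τ : ℝ) :
    ‖x - ⟪x, v⟫ • v‖ + |⟪x, v⟫ + τ| ≤ 2 * ‖x + τ • v‖ := by
  have hperp : x - ⟪x, v⟫ • v = (x + τ • v) - ⟪x + τ • v, v⟫ • v := by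
    rw [inner_add_smul_of_norm_eq_one hv, add_smul]; abel
  have hpar : |⟪x, v⟫ + τ| ≤ ‖x + τ • v‖ := by
    simpa [inner_add_smul_of_norm_eq_one hv, hv] using abs_real_inner_le_norm (x + τ • v) v
  linarith [hperp ▸ norm_sub_inner_smul_le hv (x + τ • v)]

variable {μ : ℝ}

theorem one_add_norm_add_smul_rpow_neg_le (hv : ‖v‖ = 1) (hμ : 0 ≤ μ) (x : E) (τ : ℝ) :
    (1 + ‖x + τ • v‖) ^ (-μ) ≤ 2 ^ μ * ((1 + ‖x - ⟪x, v⟫ • v‖) + |⟪x, v⟫ + τ|) ^ (-μ) := by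
  refine rpow_neg_le_two_rpow_mul_rpow_neg (by positivity) ?_ hμ
  linarith [norm_sub_inner_smul_add_abs_le hv x τ]

theorem integrable_one_add_norm_add_smul_rpow_neg (hv : ‖v‖ = 1) (hμ : 1 < μ) (x : E) :
    Integrable fun τ : ℝ => (1 + ‖x + τ • v‖) ^ (-μ) := by
  have hc : 0 < 1 + ‖x - ⟪x, v⟫ • v‖ := by positivity
  refine (((integrable_add_abs_rpow_neg hc hμ).comp_add_left ⟪x, v⟫).const_mul (2 ^ μ)).mono' ?_
    (Filter.Eventually.of_forall fun τ => ?_)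
  · exact (Continuous.rpow_const (by fun_prop) fun τ => Or.inl (by positivity)).aestronglyMeasurable
  · rw [Real.norm_of_nonneg (by positivity)]
    exact one_add_norm_add_smul_rpow_neg_le hv (by linarith) x τ

theorem integral_one_add_norm_add_smul_rpow_neg_le (hv : ‖v‖ = 1) (hμ : 1 < μ) (x : E) :
    ∫ τ : ℝ, (1 + ‖x + τ • v‖) ^ (-μ) ≤
      2 ^ μ * (∫ t : ℝ, (1 + |t|) ^ (-μ)) * (1 + ‖x - ⟪x, v⟫ • v‖) ^ (1 - μ) := by
  set P := ‖x - ⟪x, v⟫ • v‖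
  have hc : 0 < 1 + P := by positivity
  calc ∫ τ : ℝ, (1 + ‖x + τ • v‖) ^ (-μ)
      ≤ ∫ τ : ℝ, 2 ^ μ * ((1 + P) + |⟪x, v⟫ + τ|) ^ (-μ) :=
        integral_mono (integrable_one_add_norm_add_smul_rpow_neg hv hμ x)
          (((integrable_add_abs_rpow_neg hc hμ).comp_add_left _).const_mul _)
          (one_add_norm_add_smul_rpow_neg_le hv (by linarith) x)
    _ = 2 ^ μ * ∫ t : ℝ, ((1 + P) + |t|) ^ (-μ) := by
        rw [integral_const_mul, integral_add_left_eq_self (fun t => ((1 + P) + |t|) ^ (-μ))]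
    _ = 2 ^ μ * (∫ t : ℝ, (1 + |t|) ^ (-μ)) * (1 + P) ^ (1 - μ) := by
        rw [integral_add_abs_rpow_neg hc]; ring

end Line

theorem nonneg_of_forall_abs_le_mul_rpow {E : Type*} [SeminormedAddCommGroup E] {B : E → ℝ}
    {C μ : ℝ} (hB : ∀ x, |B x| ≤ C * (1 + ‖x‖) ^ (-μ)) : 0 ≤ C := by
  simpa using (abs_nonneg _).trans (hB 0)

section XRay

variable {E : Type*} [NormedAddCommGroup E] [InnerProductSpace ℝ E] {v : E} {B : E → ℝ}
  {C μ : ℝ}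

theorem integral_add_smul_add_smul (B : E → ℝ) (v x : E) (s : ℝ) :
    ∫ τ : ℝ, B ((x + s • v) + τ • v) = ∫ τ : ℝ, B (x + τ • v) := by
  simp_rw [add_assoc, ← add_smul]
  exact integral_add_left_eq_self (fun t => B (x + t • v)) s

variable (hB : ∀ x, |B x| ≤ C * (1 + ‖x‖) ^ (-μ))
include hB

theorem integrable_comp_add_smul (hBc : Continuous B) (hv : ‖v‖ = 1) (hμ : 1 < μ) (x : E) :
    Integrable fun τ : ℝ => B (x + τ • v) :=
  ((integrable_one_add_norm_add_smul_rpow_neg hv hμ x).const_mul C).mono'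
    (hBc.comp (by fun_prop)).aestronglyMeasurable (Filter.Eventually.of_forall fun τ => hB _)

theorem continuous_integral_comp_add_smul (hBc : Continuous B) (hv : ‖v‖ = 1) (hμ : 1 < μ) :
    Continuous fun x : E => ∫ τ : ℝ, B (x + τ • v) := by
  have hC := nonneg_of_forall_abs_le_mul_rpow hB
  refine continuous_iff_continuousAt.mpr fun x₀ => continuousAt_of_dominated
    (bound := fun τ => C * (2 ^ μ * (1 + ‖x₀ + τ • v‖) ^ (-μ)))
    (Filter.Eventually.of_forall fun x => (hBc.comp (by fun_prop)).aestronglyMeasurable) ?_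
    (((integrable_one_add_norm_add_smul_rpow_neg hv hμ x₀).const_mul _).const_mul C)
    (Filter.Eventually.of_forall fun τ => (hBc.comp (by fun_prop)).continuousAt)
  filter_upwards [Metric.closedBall_mem_nhds x₀ one_pos] with x hx
  refine Filter.Eventually.of_forall fun τ => (hB _).trans (mul_le_mul_of_nonneg_left ?_ hC)
  refine one_add_norm_rpow_neg_le_of_norm_sub_le ?_ (by linarith)
  simpa [dist_eq_norm] using hx

theorem abs_integral_comp_add_smul_le (hv : ‖v‖ = 1) (hμ : 1 < μ) (x : E) :
    |∫ τ : ℝ, B (x + τ • v)| ≤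
      C * 2 ^ μ * (∫ t : ℝ, (1 + |t|) ^ (-μ)) * (1 + ‖x - ⟪x, v⟫ • v‖) ^ (1 - μ) := by
  have hC := nonneg_of_forall_abs_le_mul_rpow hB
  calc |∫ τ : ℝ, B (x + τ • v)|
      ≤ ∫ τ : ℝ, C * (1 + ‖x + τ • v‖) ^ (-μ) := by
        rw [← Real.norm_eq_abs]
        exact norm_integral_le_of_norm_le
          ((integrable_one_add_norm_add_smul_rpow_neg hv hμ x).const_mul C)
          (Filter.Eventually.of_forall fun τ => hB _)
    _ = C * ∫ τ : ℝ, (1 + ‖x + τ • v‖) ^ (-μ) := integral_const_mul _ _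
    _ ≤ C * (2 ^ μ * (∫ t : ℝ, (1 + |t|) ^ (-μ)) * (1 + ‖x - ⟪x, v⟫ • v‖) ^ (1 - μ)) :=
        mul_le_mul_of_nonneg_left (integral_one_add_norm_add_smul_rpow_neg_le hv hμ x) hC
    _ = _ := by ring

end XRay

/-- for `v̂ ∈ 𝕊¹` and `B` continuous with `|B(x)| ≤ C(1+|x|)^{-μ}`, `μ > 2`,
the X-ray transform `η(x) := ∫_{-∞}^{∞} B(x + τv̂) dτ` is well defined (absolutely
convergent), continuous, invariant along `v̂`, and satisfies
`|η(x)| ≤ C' (1 + |x − (x·v̂)v̂|)^{1−μ}`. -/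
theorem stmt14 (v : EuclideanSpace ℝ (Fin 2)) (hv : ‖v‖ = 1)
    (B : EuclideanSpace ℝ (Fin 2) → ℝ) (hBc : Continuous B)
    (C μ : ℝ) (hμ : 2 < μ) (hB : ∀ x, |B x| ≤ C * (1 + ‖x‖) ^ (-μ)) :
    (∀ x : EuclideanSpace ℝ (Fin 2), Integrable (fun τ : ℝ => B (x + τ • v))) ∧
    Continuous (fun x : EuclideanSpace ℝ (Fin 2) => ∫ τ : ℝ, B (x + τ • v)) ∧
    (∀ (x : EuclideanSpace ℝ (Fin 2)) (s : ℝ),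
      (∫ τ : ℝ, B ((x + s • v) + τ • v)) = ∫ τ : ℝ, B (x + τ • v)) ∧
    ∃ C' : ℝ, 0 < C' ∧ ∀ x : EuclideanSpace ℝ (Fin 2),
      |∫ τ : ℝ, B (x + τ • v)| ≤ C' * (1 + ‖x - (inner ℝ x v : ℝ) • v‖) ^ (1 - μ) := by
  have hμ1 : 1 < μ := by linarith
  refine ⟨integrable_comp_add_smul hB hBc hv hμ1, continuous_integral_comp_add_smul hB hBc hv hμ1,
    integral_add_smul_add_smul B v, ?_⟩
  have hC := nonneg_of_forall_abs_le_mul_rpow hB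
  have hK : 0 ≤ ∫ t : ℝ, (1 + |t|) ^ (-μ) := integral_nonneg fun t => by positivity
  refine ⟨C * 2 ^ μ * (∫ t : ℝ, (1 + |t|) ^ (-μ)) + 1, by positivity, fun x => ?_⟩
  refine (abs_integral_comp_add_smul_le hB hv hμ1 x).trans ?_
  gcongr
  linarith
end

section
/- Let v̂ ∈ 𝕊¹ and let A : ℝ² → ℝ² be a C¹ vector field such that |A(x)| ≤ C(1+|x|)^{-1} and |DA(x)| ≤ C(1+|x|)^{-2} for all x. Define a(x) := ∫_{−∞}^{∞} v̂ · A(x + τ v̂) dτ for those x where the integral converges. Suppose the integral converges for all x in an open set U with x + ℝv̂ ⊆ U. Then, in the sense of distributions on U, v̂ × ∇a(x) = −∫_{−∞}^{∞} B(x + τ v̂) dτ, where B := ∂₁A₂ − ∂₂A₁ and v̂ × w := v̂₁w₂ − v̂₂w₁ for w ∈ ℝ². -/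
open MeasureTheory

open Set Filter Topology

noncomputable section

private lemma aux_abs_le {v : EuclideanSpace ℝ (Fin 2)} (hv : ‖v‖ = 1)
    (x x' : EuclideanSpace ℝ (Fin 2)) (h : ‖x' - x‖ ≤ 1) (τ : ℝ) :
    |τ| ≤ (‖x‖ + 1) + ‖x' + τ • v‖ := by
  have h1 : |τ| = ‖(x' + τ • v) - x'‖ := by
    rw [add_sub_cancel_left, norm_smul, hv, Real.norm_eq_abs, mul_one]
  have h2 : ‖x'‖ - ‖x‖ ≤ 1 := (norm_sub_norm_le x' x).trans h
  have h3 := norm_sub_le (x' + τ • v) x'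
  linarith [h1 ▸ h3]

private lemma aux_int_bound' (C R : ℝ) :
    Integrable (fun τ : ℝ => C * (1 + R) ^ 2 * (1 + τ ^ 2)⁻¹) :=
  integrable_inv_one_add_sq.const_mul _

private lemma aux_bnd2 {C R r τ : ℝ} (hC : 0 ≤ C) (hR : 0 ≤ R) (hr : 0 ≤ r)
    (h : |τ| ≤ R + r) :
    C * (1 + r) ^ (-(2:ℝ)) ≤ C * (1 + R) ^ 2 * (1 + τ ^ 2)⁻¹ := by
  have h1 : (0:ℝ) < 1 + r := by linarith
  have h2 : (0:ℝ) < 1 + τ ^ 2 := by positivity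
  have h3 : (0:ℝ) < (1 + r) ^ 2 := by positivity
  have hτ2 : τ ^ 2 ≤ (R + r) ^ 2 := by
    rw [← sq_abs]
    exact pow_le_pow_left₀ (abs_nonneg τ) h 2
  have key : 1 + τ ^ 2 ≤ (1 + R) ^ 2 * (1 + r) ^ 2 := by
    nlinarith [mul_nonneg hR hr, mul_nonneg (mul_nonneg hR hr) (add_nonneg hR hr)]
  have hrw : (1 + r) ^ (-(2:ℝ)) = ((1 + r) ^ 2)⁻¹ := by
    rw [show (-(2:ℝ)) = -((2:ℕ):ℝ) by norm_num, Real.rpow_neg h1.le, Real.rpow_natCast]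
  rw [hrw, mul_assoc]
  refine mul_le_mul_of_nonneg_left ?_ hC
  rw [← one_div, ← div_eq_mul_inv, div_le_div_iff₀ h3 h2]
  linarith [key]

private lemma aux_bnd' {C R r τ : ℝ} (hC : 0 ≤ C) (hR : 0 ≤ R) (hr : 0 ≤ r)
    (h : |τ| ≤ R + r) :
    C * (1 + r) ^ (-(2:ℝ)) ≤ C * (1 + R) ^ 2 * (1 + τ ^ 2)⁻¹ :=
  aux_bnd2 hC hR hr h

private lemma aux_integrable {G : Type*} [NormedAddCommGroup G]
    {v : EuclideanSpace ℝ (Fin 2)} (hv : ‖v‖ = 1) {K : ℝ} (hK : 0 ≤ K)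
    (x : EuclideanSpace ℝ (Fin 2)) {F : ℝ → G}
    (hmeas : AEStronglyMeasurable F volume)
    (hb : ∀ τ : ℝ, ‖F τ‖ ≤ K * (1 + ‖x + τ • v‖) ^ (-(2:ℝ))) :
    Integrable F := by
  refine (aux_int_bound' K (‖x‖ + 1)).mono' hmeas ?_
  filter_upwards with τ
  exact (hb τ).trans (aux_bnd' hK (by positivity) (norm_nonneg _)
    (aux_abs_le hv x x (by simp) τ))

variable {A : EuclideanSpace ℝ (Fin 2) → EuclideanSpace ℝ (Fin 2)}
  {C : ℝ} {v : EuclideanSpace ℝ (Fin 2)}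

private lemma aux_deriv_inner (hA : ContDiff ℝ 1 A)
    (u y : EuclideanSpace ℝ (Fin 2)) :
    HasFDerivAt (fun z => (inner ℝ u (A z) : ℝ)) ((innerSL ℝ u).comp (fderiv ℝ A y)) y :=
  (innerSL ℝ u).hasFDerivAt.comp y (hA.differentiable one_ne_zero y).hasFDerivAt

private lemma aux_deriv_line (hA : ContDiff ℝ 1 A)
    (u x' : EuclideanSpace ℝ (Fin 2)) (c : EuclideanSpace ℝ (Fin 2)) :
    HasFDerivAt (fun z => (inner ℝ u (A (z + c)) : ℝ))
      ((innerSL ℝ u).comp (fderiv ℝ A (x' + c))) x' := by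
  have h := (aux_deriv_inner hA u (x' + c)).comp x' ((hasFDerivAt_id x').add_const c)
  simpa only [ContinuousLinearMap.comp_id, Function.comp_def, id_eq] using h

private lemma aux_norm (hA2 : ∀ x, ‖fderiv ℝ A x‖ ≤ C * (1 + ‖x‖) ^ (-(2:ℝ)))
    (u y : EuclideanSpace ℝ (Fin 2)) :
    ‖(innerSL ℝ u).comp (fderiv ℝ A y)‖ ≤ ‖u‖ * C * (1 + ‖y‖) ^ (-(2:ℝ)) := by
  calc ‖(innerSL ℝ u).comp (fderiv ℝ A y)‖ ≤ ‖innerSL ℝ u‖ * ‖fderiv ℝ A y‖ :=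
        ContinuousLinearMap.opNorm_comp_le _ _
  _ ≤ ‖u‖ * (C * (1 + ‖y‖) ^ (-(2:ℝ))) := by
        rw [innerSL_apply_norm]
        exact mul_le_mul_of_nonneg_left (hA2 y) (norm_nonneg u)
  _ = ‖u‖ * C * (1 + ‖y‖) ^ (-(2:ℝ)) := (mul_assoc _ _ _).symm

private lemma aux_clm_integrable (hA : ContDiff ℝ 1 A)
    (hA2 : ∀ x, ‖fderiv ℝ A x‖ ≤ C * (1 + ‖x‖) ^ (-(2:ℝ)))
    (hC : 0 ≤ C) (hv : ‖v‖ = 1) (u x : EuclideanSpace ℝ (Fin 2)) :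
    Integrable (fun τ : ℝ => (innerSL ℝ u).comp (fderiv ℝ A (x + τ • v))) := by
  refine aux_integrable hv (K := ‖u‖ * C) (by positivity) x ?_ ?_
  · refine Continuous.aestronglyMeasurable ?_
    exact continuous_const.clm_comp ((hA.continuous_fderiv one_ne_zero).comp (by continuity))
  · intro τ
    exact aux_norm hA2 u (x + τ • v)

-- differentiation under the integral sign
private lemma aux_hasfderiv (hA : ContDiff ℝ 1 A)
    (hA2 : ∀ x, ‖fderiv ℝ A x‖ ≤ C * (1 + ‖x‖) ^ (-(2:ℝ)))
    (hC : 0 ≤ C) (hv : ‖v‖ = 1) (x : EuclideanSpace ℝ (Fin 2))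
    (hx : Integrable (fun τ : ℝ => (inner ℝ v (A (x + τ • v)) : ℝ))) :
    HasFDerivAt (fun z => ∫ τ : ℝ, (inner ℝ v (A (z + τ • v)) : ℝ))
      (∫ τ : ℝ, (innerSL ℝ v).comp (fderiv ℝ A (x + τ • v))) x := by
  apply hasFDerivAt_integral_of_dominated_of_fderiv_le
    (F' := fun x' (τ : ℝ) => (innerSL ℝ v).comp (fderiv ℝ A (x' + τ • v)))
    (bound := fun τ => ‖v‖ * C * (1 + (‖x‖ + 1)) ^ 2 * (1 + τ ^ 2)⁻¹)
    (s := Metric.ball x 1) (Metric.ball_mem_nhds x one_pos)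
  · filter_upwards with x'
    refine Continuous.aestronglyMeasurable ?_
    exact continuous_const.inner (hA.continuous.comp (by continuity))
  · exact hx
  · refine Continuous.aestronglyMeasurable ?_
    exact continuous_const.clm_comp ((hA.continuous_fderiv one_ne_zero).comp (by continuity))
  · filter_upwards with τ
    intro x' hx'
    refine (aux_norm hA2 v (x' + τ • v)).trans ?_
    exact aux_bnd' (by positivity) (by positivity) (norm_nonneg _)
      (aux_abs_le hv x x' (le_of_lt (by simpa [dist_eq_norm] using hx')) τ)
  · exact aux_int_bound' (‖v‖ * C) (‖x‖ + 1)
  · filter_upwards with τ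
    intro x' _
    exact aux_deriv_line hA v x' (τ • v)

-- continuity of dominated line integrals of fderiv-type integrands
private lemma aux_cont (hA : ContDiff ℝ 1 A)
    (hA2 : ∀ x, ‖fderiv ℝ A x‖ ≤ C * (1 + ‖x‖) ^ (-(2:ℝ)))
    (hC : 0 ≤ C) (hv : ‖v‖ = 1) (u c : EuclideanSpace ℝ (Fin 2)) :
    Continuous (fun x : EuclideanSpace ℝ (Fin 2) =>
      ∫ τ : ℝ, (inner ℝ u (fderiv ℝ A (x + τ • v) c) : ℝ)) := by
  rw [continuous_iff_continuousAt]
  intro x₀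
  apply continuousAt_of_dominated
    (bound := fun τ => ‖u‖ * ‖c‖ * C * (1 + (‖x₀‖ + 1)) ^ 2 * (1 + τ ^ 2)⁻¹)
  · filter_upwards with x
    refine Continuous.aestronglyMeasurable ?_
    exact continuous_const.inner
      ((((hA.continuous_fderiv one_ne_zero).comp (by continuity)).clm_apply continuous_const))
  · filter_upwards [Metric.ball_mem_nhds x₀ one_pos] with x hx
    filter_upwards with τ
    have hb : ‖(inner ℝ u (fderiv ℝ A (x + τ • v) c) : ℝ)‖
        ≤ ‖u‖ * ‖c‖ * C * (1 + ‖x + τ • v‖) ^ (-(2:ℝ)) := by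
      calc ‖(inner ℝ u (fderiv ℝ A (x + τ • v) c) : ℝ)‖
          ≤ ‖u‖ * ‖fderiv ℝ A (x + τ • v) c‖ := norm_inner_le_norm _ _
      _ ≤ ‖u‖ * (‖fderiv ℝ A (x + τ • v)‖ * ‖c‖) :=
          mul_le_mul_of_nonneg_left ((fderiv ℝ A (x + τ • v)).le_opNorm c) (norm_nonneg u)
      _ = ‖u‖ * ‖c‖ * ‖fderiv ℝ A (x + τ • v)‖ := by ring
      _ ≤ ‖u‖ * ‖c‖ * (C * (1 + ‖x + τ • v‖) ^ (-(2:ℝ))) :=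
          mul_le_mul_of_nonneg_left (hA2 _) (by positivity)
      _ = ‖u‖ * ‖c‖ * C * (1 + ‖x + τ • v‖) ^ (-(2:ℝ)) := by ring
    exact hb.trans (aux_bnd' (by positivity) (by positivity) (norm_nonneg _)
      (aux_abs_le hv x₀ x (le_of_lt (by simpa [dist_eq_norm] using hx)) τ))
  · exact aux_int_bound' (‖u‖ * ‖c‖ * C) (‖x₀‖ + 1)
  · filter_upwards with τ
    refine Continuous.continuousAt ?_
    exact continuous_const.inner
      (((hA.continuous_fderiv one_ne_zero).comp (by continuity)).clm_apply continuous_const)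

-- scalar integrability of inner u (fderiv A (x+τv) c)
private lemma aux_int_scalar (hA : ContDiff ℝ 1 A)
    (hA2 : ∀ x, ‖fderiv ℝ A x‖ ≤ C * (1 + ‖x‖) ^ (-(2:ℝ)))
    (hC : 0 ≤ C) (hv : ‖v‖ = 1) (u c x : EuclideanSpace ℝ (Fin 2)) :
    Integrable (fun τ : ℝ => (inner ℝ u (fderiv ℝ A (x + τ • v) c) : ℝ)) := by
  refine aux_integrable hv (K := ‖u‖ * ‖c‖ * C) (by positivity) x ?_ ?_
  · refine Continuous.aestronglyMeasurable ?_
    exact continuous_const.inner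
      (((hA.continuous_fderiv one_ne_zero).comp (by continuity)).clm_apply continuous_const)
  · intro τ
    calc ‖(inner ℝ u (fderiv ℝ A (x + τ • v) c) : ℝ)‖
        ≤ ‖u‖ * ‖fderiv ℝ A (x + τ • v) c‖ := norm_inner_le_norm _ _
    _ ≤ ‖u‖ * (‖fderiv ℝ A (x + τ • v)‖ * ‖c‖) :=
        mul_le_mul_of_nonneg_left ((fderiv ℝ A (x + τ • v)).le_opNorm c) (norm_nonneg u)
    _ = ‖u‖ * ‖c‖ * ‖fderiv ℝ A (x + τ • v)‖ := by ring
    _ ≤ ‖u‖ * ‖c‖ * (C * (1 + ‖x + τ • v‖) ^ (-(2:ℝ))) :=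
        mul_le_mul_of_nonneg_left (hA2 _) (by positivity)
    _ = ‖u‖ * ‖c‖ * C * (1 + ‖x + τ • v‖) ^ (-(2:ℝ)) := by ring

private lemma aux_ftc (hA : ContDiff ℝ 1 A)
    (hA1 : ∀ x, ‖A x‖ ≤ C * (1 + ‖x‖)⁻¹)
    (hA2 : ∀ x, ‖fderiv ℝ A x‖ ≤ C * (1 + ‖x‖) ^ (-(2:ℝ)))
    (hC : 0 ≤ C) (hv : ‖v‖ = 1) (u x : EuclideanSpace ℝ (Fin 2)) :
    ∫ τ : ℝ, (inner ℝ u (fderiv ℝ A (x + τ • v) v) : ℝ) = 0 := by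
  set h : ℝ → ℝ := fun τ => (inner ℝ u (A (x + τ • v)) : ℝ) with hh
  have hcurve : ∀ τ : ℝ, HasDerivAt (fun t : ℝ => x + t • v) v τ := by
    intro τ
    have h0 : HasDerivAt (fun t : ℝ => t • v) v τ := by
      simpa using (hasDerivAt_id τ).smul_const v
    exact h0.const_add x
  have hderiv : ∀ τ : ℝ, HasDerivAt h ((inner ℝ u (fderiv ℝ A (x + τ • v) v) : ℝ)) τ := by
    intro τ
    rw [hh]
    have := (aux_deriv_inner hA u (x + τ • v)).comp_hasDerivAt τ (hcurve τ)
    simpa [Function.comp_def] using this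
  have hint : Integrable (fun τ : ℝ => (inner ℝ u (fderiv ℝ A (x + τ • v) v) : ℝ)) :=
    aux_int_scalar hA hA2 hC hv u v x
  have hnorm : ∀ τ : ℝ, ‖h τ‖ ≤ ‖u‖ * C * (1 + ‖x + τ • v‖)⁻¹ := by
    intro τ
    calc ‖h τ‖ ≤ ‖u‖ * ‖A (x + τ • v)‖ := norm_inner_le_norm _ _
    _ ≤ ‖u‖ * (C * (1 + ‖x + τ • v‖)⁻¹) :=
        mul_le_mul_of_nonneg_left (hA1 _) (norm_nonneg u)
    _ = ‖u‖ * C * (1 + ‖x + τ • v‖)⁻¹ := by ring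
  have htenTop : Tendsto (fun τ : ℝ => ‖x + τ • v‖) atTop atTop := by
    apply tendsto_atTop_mono' _ _ (tendsto_atTop_add_const_right atTop (-(‖x‖ + 1)) tendsto_id)
    filter_upwards [Filter.eventually_ge_atTop (0:ℝ)] with τ hτ
    have := aux_abs_le hv x x (by simp) τ
    rw [abs_of_nonneg hτ] at this
    simp only [id]
    linarith
  have htenBot : Tendsto (fun τ : ℝ => ‖x + τ • v‖) atBot atTop := by
    apply tendsto_atTop_mono' _ _
      (tendsto_atTop_add_const_right atBot (-(‖x‖ + 1)) tendsto_neg_atBot_atTop)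
    filter_upwards [Filter.eventually_le_atBot (0:ℝ)] with τ hτ
    have := aux_abs_le hv x x (by simp) τ
    rw [abs_of_nonpos hτ] at this
    linarith
  have hbnd0 : ∀ {l : Filter ℝ}, Tendsto (fun τ : ℝ => ‖x + τ • v‖) l atTop →
      Tendsto h l (𝓝 0) := by
    intro l hl
    apply squeeze_zero_norm hnorm
    have h1 : Tendsto (fun τ : ℝ => (1 + ‖x + τ • v‖)⁻¹) l (𝓝 0) :=
      tendsto_inv_atTop_zero.comp (tendsto_atTop_add_const_left l 1 hl)
    have := h1.const_mul (‖u‖ * C)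
    simpa [mul_assoc] using this
  have htop : Tendsto h atTop (𝓝 0) := hbnd0 htenTop
  have hbot : Tendsto h atBot (𝓝 0) := hbnd0 htenBot
  calc (∫ τ : ℝ, (inner ℝ u (fderiv ℝ A (x + τ • v) v) : ℝ))
      = (∫ τ in Iic (0:ℝ), (inner ℝ u (fderiv ℝ A (x + τ • v) v) : ℝ))
        + ∫ τ in Ioi (0:ℝ), (inner ℝ u (fderiv ℝ A (x + τ • v) v) : ℝ) :=
      (intervalIntegral.integral_Iic_add_Ioi hint.integrableOn hint.integrableOn).symm
  _ = (h 0 - 0) + (0 - h 0) := by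
      rw [integral_Iic_of_hasDerivAt_of_tendsto' (fun τ _ => hderiv τ)
          hint.integrableOn hbot,
        integral_Ioi_of_hasDerivAt_of_tendsto' (fun τ _ => hderiv τ)
          hint.integrableOn htop]
  _ = 0 := by ring

private lemma aux_curl (hA : ContDiff ℝ 1 A) (hv : ‖v‖ = 1) (y : EuclideanSpace ℝ (Fin 2)) :
    (inner ℝ v (fderiv ℝ A y ((v 0) • EuclideanSpace.single 1 1 - (v 1) • EuclideanSpace.single 0 1)) : ℝ)
      = (inner ℝ ((v 0) • EuclideanSpace.single 1 1 - (v 1) • EuclideanSpace.single 0 1)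
          (fderiv ℝ A y v) : ℝ)
        - (fderiv ℝ (fun z => A z 1) y (EuclideanSpace.single 0 1)
            - fderiv ℝ (fun z => A z 0) y (EuclideanSpace.single 1 1)) := by
  have hproj : ∀ (i : Fin 2) (c : EuclideanSpace ℝ (Fin 2)),
      fderiv ℝ (fun z => A z i) y c = fderiv ℝ A y c i := by
    intro i c
    have h1 : HasFDerivAt (fun z => A z i)
        ((EuclideanSpace.proj i).comp (fderiv ℝ A y)) y :=
      (EuclideanSpace.proj (𝕜 := ℝ) i).hasFDerivAt.comp y
        (hA.differentiable one_ne_zero y).hasFDerivAt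
    rw [h1.fderiv]; rfl
  have hv2 : v 0 * v 0 + v 1 * v 1 = 1 := by
    have h := real_inner_self_eq_norm_sq v
    rw [hv, one_pow] at h
    simpa only [PiLp.inner_apply, RCLike.inner_apply, conj_trivial, Fin.sum_univ_two] using h
  have hvdec : v = (v 0) • EuclideanSpace.single 0 1 + (v 1) • EuclideanSpace.single 1 1 := by
    ext i
    fin_cases i <;>
      simp [EuclideanSpace.single_apply]
  have hMv : fderiv ℝ A y v
      = (v 0) • fderiv ℝ A y (EuclideanSpace.single 0 1)
        + (v 1) • fderiv ℝ A y (EuclideanSpace.single 1 1) := by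
    conv_lhs => rw [hvdec]
    rw [ContinuousLinearMap.map_add, ContinuousLinearMap.map_smul, ContinuousLinearMap.map_smul]
  have hMw : fderiv ℝ A y ((v 0) • EuclideanSpace.single 1 1 - (v 1) • EuclideanSpace.single 0 1)
      = (v 0) • fderiv ℝ A y (EuclideanSpace.single 1 1)
        - (v 1) • fderiv ℝ A y (EuclideanSpace.single 0 1) := by
    rw [ContinuousLinearMap.map_sub, ContinuousLinearMap.map_smul, ContinuousLinearMap.map_smul]
  rw [hproj, hproj, hMw, hMv]
  simp only [PiLp.inner_apply, RCLike.inner_apply, conj_trivial, Fin.sum_univ_two,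
    PiLp.smul_apply, PiLp.sub_apply, PiLp.add_apply, smul_eq_mul,
    EuclideanSpace.single_apply]
  norm_num
  ring_nf
  linear_combination (fderiv ℝ A y (EuclideanSpace.single 1 1) 0
    - fderiv ℝ A y (EuclideanSpace.single 0 1) 1) * hv2


private lemma aux_cutoff {E : Type*} [NormedAddCommGroup E] [NormedSpace ℝ E]
    [FiniteDimensional ℝ E] {K U : Set E} (hK : IsCompact K) (hU : IsOpen U) (hKU : K ⊆ U) :
    ∃ χ : E → ℝ, ContDiff ℝ (⊤ : ℕ∞) χ ∧ HasCompactSupport χ ∧ tsupport χ ⊆ U ∧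
      ∀ x ∈ K, χ =ᶠ[nhds x] 1 := by
  obtain ⟨K₁, hK₁c, hKK₁, hK₁U⟩ := exists_compact_between hK hU hKU
  obtain ⟨K₂, hK₂c, hK₁K₂, hK₂U⟩ := exists_compact_between hK₁c hU hK₁U
  obtain ⟨f, fsupp, fdiff, frange⟩ := (isOpen_interior (s := K₂)).exists_contDiff_support_eq (n := (⊤ : ℕ∞))
  obtain ⟨g, gsupp, gdiff, grange⟩ := hK₁c.isClosed.isOpen_compl.exists_contDiff_support_eq (n := (⊤ : ℕ∞))
  have fpos : ∀ x, 0 ≤ f x := fun x => (frange (Set.mem_range_self x)).1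
  have gpos : ∀ x, 0 ≤ g x := fun x => (grange (Set.mem_range_self x)).1
  have hfg : ∀ x, 0 < f x + g x := by
    intro x
    by_cases hx : x ∈ K₁
    · have : f x ≠ 0 := by
        rw [← Function.mem_support, fsupp]; exact hK₁K₂ hx
      have := lt_of_le_of_ne (fpos x) (Ne.symm this)
      linarith [gpos x]
    · have : g x ≠ 0 := by rw [← Function.mem_support, gsupp]; exact hx
      have := lt_of_le_of_ne (gpos x) (Ne.symm this)
      linarith [fpos x]
  have hsupp : Function.support (fun x => f x / (f x + g x)) ⊆ K₂ := by
    intro x hx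
    have hfx : f x ≠ 0 := by
      intro h
      exact hx (by simp [h])
    exact interior_subset (fsupp ▸ Function.mem_support.2 hfx)
  have hts : tsupport (fun x => f x / (f x + g x)) ⊆ K₂ :=
    closure_minimal hsupp hK₂c.isClosed
  refine ⟨fun x => f x / (f x + g x), ?_, ?_, hts.trans hK₂U, ?_⟩
  · exact fdiff.div (fdiff.add gdiff) fun x => (hfg x).ne'
  · exact hK₂c.of_isClosed_subset (isClosed_tsupport _) hts
  · intro x hx
    filter_upwards [isOpen_interior.mem_nhds (hKK₁ hx)] with y hy
    have hgy : g y = 0 := by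
      have : y ∉ Function.support g := by
        rw [gsupp]; exact fun hc => hc (interior_subset hy)
      exact Function.notMem_support.1 this
    have hfy : 0 < f y := by have := hfg y; rwa [hgy, add_zero] at this
    simp only [hgy, add_zero, div_self hfy.ne']
    rfl


private lemma aux_proj (hA : ContDiff ℝ 1 A) (i : Fin 2)
    (y c : EuclideanSpace ℝ (Fin 2)) :
    fderiv ℝ (fun z => A z i) y c
      = (inner ℝ (EuclideanSpace.single i (1:ℝ)) (fderiv ℝ A y c) : ℝ) := by
  have h1 : HasFDerivAt (fun z => A z i)
      ((EuclideanSpace.proj i).comp (fderiv ℝ A y)) y :=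
    (EuclideanSpace.proj (𝕜 := ℝ) i).hasFDerivAt.comp y
      ((hA.differentiable one_ne_zero y).hasFDerivAt)
  rw [h1.fderiv]
  simp [EuclideanSpace.inner_single_left]

/-- let `v̂ ∈ 𝕊¹`, `A` a `C¹` vector field on `ℝ²` with
`|A(x)| ≤ C(1+|x|)⁻¹`, `|DA(x)| ≤ C(1+|x|)⁻²`, and let
`a(x) := ∫ v̂·A(x+τv̂) dτ`, assumed convergent on an open `v̂`-invariant set `U`.
Then in the distributional sense on `U`, `v̂ × ∇a = −∫ B(x+τv̂) dτ` with
`B = ∂₁A₂ − ∂₂A₁`: tested against any `φ ∈ C_c^∞(U)`,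
`∫ a (v̂₁∂₂φ − v̂₂∂₁φ) = ∫ (∫ B(x+τv̂) dτ) φ`. -/
theorem stmt15 (v : EuclideanSpace ℝ (Fin 2)) (hv : ‖v‖ = 1)
    (A : EuclideanSpace ℝ (Fin 2) → EuclideanSpace ℝ (Fin 2)) (hA : ContDiff ℝ 1 A)
    (C : ℝ) (hA1 : ∀ x, ‖A x‖ ≤ C * (1 + ‖x‖)⁻¹)
    (hA2 : ∀ x, ‖fderiv ℝ A x‖ ≤ C * (1 + ‖x‖) ^ (-(2:ℝ)))
    (U : Set (EuclideanSpace ℝ (Fin 2))) (hU : IsOpen U)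
    (hUinv : ∀ x ∈ U, ∀ t : ℝ, x + t • v ∈ U)
    (hint : ∀ x ∈ U, Integrable (fun τ : ℝ => (inner ℝ v (A (x + τ • v)) : ℝ))) :
    ∀ φ : EuclideanSpace ℝ (Fin 2) → ℝ, ContDiff ℝ (⊤ : ℕ∞) φ → HasCompactSupport φ →
      tsupport φ ⊆ U →
      (∫ x : EuclideanSpace ℝ (Fin 2),
          (∫ τ : ℝ, (inner ℝ v (A (x + τ • v)) : ℝ)) *
            (v 0 * fderiv ℝ φ x (EuclideanSpace.single 1 1)
              - v 1 * fderiv ℝ φ x (EuclideanSpace.single 0 1)))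
        = ∫ x : EuclideanSpace ℝ (Fin 2),
            (∫ τ : ℝ,
              (fderiv ℝ (fun y => A y 1) (x + τ • v) (EuclideanSpace.single 0 1)
                - fderiv ℝ (fun y => A y 0) (x + τ • v) (EuclideanSpace.single 1 1))) * φ x := by
  intro φ hφ hφc hφU
  have hC : 0 ≤ C := le_trans (norm_nonneg (A 0)) (by simpa using hA1 0)
  set e0 : EuclideanSpace ℝ (Fin 2) := EuclideanSpace.single 0 1 with he0
  set e1 : EuclideanSpace ℝ (Fin 2) := EuclideanSpace.single 1 1 with he1
  set w : EuclideanSpace ℝ (Fin 2) := v 0 • e1 - v 1 • e0 with hwdef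
  set aF : EuclideanSpace ℝ (Fin 2) → ℝ :=
    fun z => ∫ τ : ℝ, (inner ℝ v (A (z + τ • v)) : ℝ) with haF
  set Gf : EuclideanSpace ℝ (Fin 2) → ℝ :=
    fun z => ∫ τ : ℝ, (inner ℝ v (fderiv ℝ A (z + τ • v) w) : ℝ) with hGfdef
  have hφd : Differentiable ℝ φ := hφ.differentiable (by simp)
  -- the cutoff function
  obtain ⟨χ, hχs, hχc, hχU, hχ1⟩ := aux_cutoff hφc hU hφU
  have hχd : Differentiable ℝ χ := hχs.differentiable (by simp)
  -- derivative of aF on U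
  have haFd : ∀ x ∈ U, HasFDerivAt aF
      (∫ τ : ℝ, (innerSL ℝ v).comp (fderiv ℝ A (x + τ • v))) x := by
    intro x hx
    simp only [haF]
    exact aux_hasfderiv hA hA2 hC hv x (hint x hx)
  have happ : ∀ x : EuclideanSpace ℝ (Fin 2),
      (∫ τ : ℝ, (innerSL ℝ v).comp (fderiv ℝ A (x + τ • v))) w = Gf x := by
    intro x
    rw [ContinuousLinearMap.integral_apply (aux_clm_integrable hA hA2 hC hv v x)]
    simp only [hGfdef]
    rfl
  have hGfcont : Continuous Gf := by
    simp only [hGfdef]; exact aux_cont hA hA2 hC hv v w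
  -- line derivative of χ * aF everywhere
  have hlf : ∀ x, HasLineDerivAt ℝ (fun y => χ y * aF y)
      (χ x * Gf x + aF x * fderiv ℝ χ x w) x w := by
    intro x
    by_cases hxU : x ∈ U
    · have ha := haFd x hxU
      have hmul := ((hχd x).hasFDerivAt).mul ha
      have hl := hmul.hasLineDerivAt w
      have hl' : HasLineDerivAt ℝ (fun y => χ y * aF y) (((χ x • ∫ τ : ℝ,
          (innerSL ℝ v).comp (fderiv ℝ A (x + τ • v))) + aF x • fderiv ℝ χ x) w) x w := hl
      convert hl' using 1
      simp only [ContinuousLinearMap.add_apply, ContinuousLinearMap.coe_smul',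
        Pi.smul_apply, smul_eq_mul, happ x]
      try ring
    · have hxs : x ∉ tsupport χ := fun h => hxU (hχU h)
      have hχ0 : χ =ᶠ[nhds x] 0 := notMem_tsupport_iff_eventuallyEq.1 hxs
      have hev : (fun y => χ y * aF y) =ᶠ[nhds x] fun _ => (0:ℝ) := by
        filter_upwards [hχ0] with y hy
        simp [hy]
      have hval : χ x * Gf x + aF x * fderiv ℝ χ x w = 0 := by
        have h1 : χ x = 0 := image_eq_zero_of_notMem_tsupport hxs
        have h2 : fderiv ℝ χ x = 0 := by
          rw [hχ0.fderiv_eq]; exact fderiv_const_apply 0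
        rw [h1, h2]; simp
      rw [hval]
      have hcont : Continuous fun t : ℝ => x + t • w :=
        continuous_const.add (continuous_id.smul continuous_const)
      have hten : Tendsto (fun t : ℝ => x + t • w) (nhds 0) (nhds x) := by
        have := hcont.tendsto 0
        simpa using this
      have hev2 : (fun t : ℝ => χ (x + t • w) * aF (x + t • w)) =ᶠ[nhds (0:ℝ)]
          fun _ => (0:ℝ) := hev.comp_tendsto hten
      exact (hasDerivAt_const (0:ℝ) (0:ℝ)).congr_of_eventuallyEq hev2
  have hlg : ∀ x, HasLineDerivAt ℝ φ (fderiv ℝ φ x w) x w :=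
    fun x => ((hφd x).hasFDerivAt).hasLineDerivAt w
  -- continuity of χ * aF
  have hacont : Continuous fun y => χ y * aF y := by
    rw [continuous_iff_continuousAt]
    intro x
    by_cases hxU : x ∈ U
    · exact (hχs.continuous.continuousAt).mul (haFd x hxU).continuousAt
    · have hxs : x ∉ tsupport χ := fun h => hxU (hχU h)
      have hχ0 : χ =ᶠ[nhds x] 0 := notMem_tsupport_iff_eventuallyEq.1 hxs
      have hev : (fun y => χ y * aF y) =ᶠ[nhds x] fun _ => (0:ℝ) := by
        filter_upwards [hχ0] with y hy
        simp [hy]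
      exact ContinuousAt.congr continuousAt_const hev.symm
  have hχac : HasCompactSupport fun y => χ y * aF y := hχc.mul_right
  have hDφcont : Continuous fun x => fderiv ℝ φ x w :=
    (hφ.continuous_fderiv (by simp)).clm_apply continuous_const
  -- pointwise identity for the f' * φ integrand
  have heq : ∀ x, (χ x * Gf x + aF x * fderiv ℝ χ x w) * φ x = Gf x * φ x := by
    intro x
    by_cases hx : x ∈ tsupport φ
    · have h1 : χ x = 1 := by simpa using (hχ1 x hx).eq_of_nhds
      have h2 : fderiv ℝ χ x = 0 := by
        rw [(hχ1 x hx).fderiv_eq]; exact fderiv_const_apply 1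
      rw [h1, h2]; simp
    · rw [image_eq_zero_of_notMem_tsupport hx]; ring
  -- the three integrability conditions
  have hf'g : Integrable (fun x => (χ x * Gf x + aF x * fderiv ℝ χ x w) * φ x) := by
    have : (fun x => (χ x * Gf x + aF x * fderiv ℝ χ x w) * φ x)
        = fun x => Gf x * φ x := funext heq
    rw [this]
    exact (hGfcont.mul hφ.continuous).integrable_of_hasCompactSupport hφc.mul_left
  have hfg' : Integrable (fun x => (χ x * aF x) * fderiv ℝ φ x w) :=
    (hacont.mul hDφcont).integrable_of_hasCompactSupport hχac.mul_right
  have hfg : Integrable (fun x => (χ x * aF x) * φ x) :=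
    (hacont.mul hφ.continuous).integrable_of_hasCompactSupport hχac.mul_right
  -- integration by parts
  have hIBP := integral_bilinear_hasLineDerivAt_right_eq_neg_left_of_integrable
    (μ := (volume : Measure (EuclideanSpace ℝ (Fin 2))))
    (B := ContinuousLinearMap.mul ℝ ℝ) (v := w)
    (f := fun y => χ y * aF y) (f' := fun x => χ x * Gf x + aF x * fderiv ℝ χ x w)
    (g := φ) (g' := fun x => fderiv ℝ φ x w)
    (by simpa only [ContinuousLinearMap.mul_apply'] using hf'g)
    (by simpa only [ContinuousLinearMap.mul_apply'] using hfg')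
    (by simpa only [ContinuousLinearMap.mul_apply'] using hfg) (fun x _ => hlf x) (fun x _ => hlg x)
  simp only [ContinuousLinearMap.mul_apply'] at hIBP
  -- Gf = - Gc
  have hGfc : ∀ x, Gf x = - ∫ τ : ℝ,
      (fderiv ℝ (fun y => A y 1) (x + τ • v) e0
        - fderiv ℝ (fun y => A y 0) (x + τ • v) e1) := by
    intro x
    have hcurl : ∀ τ : ℝ, (inner ℝ v (fderiv ℝ A (x + τ • v) w) : ℝ)
        = (inner ℝ w (fderiv ℝ A (x + τ • v) v) : ℝ)
          - (fderiv ℝ (fun z => A z 1) (x + τ • v) e0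
              - fderiv ℝ (fun z => A z 0) (x + τ • v) e1) := by
      intro τ
      rw [hwdef, he0, he1]
      exact aux_curl hA hv (x + τ • v)
    have hQint : Integrable (fun τ : ℝ =>
        fderiv ℝ (fun z => A z 1) (x + τ • v) e0
          - fderiv ℝ (fun z => A z 0) (x + τ • v) e1) := by
      simp only [aux_proj hA 1, aux_proj hA 0]
      exact (aux_int_scalar hA hA2 hC hv (EuclideanSpace.single 1 1) e0 x).sub
        (aux_int_scalar hA hA2 hC hv (EuclideanSpace.single 0 1) e1 x)
    calc Gf x = ∫ τ : ℝ, ((inner ℝ w (fderiv ℝ A (x + τ • v) v) : ℝ)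
          - (fderiv ℝ (fun z => A z 1) (x + τ • v) e0
              - fderiv ℝ (fun z => A z 0) (x + τ • v) e1)) := by
          simp only [hGfdef]
          exact integral_congr_ae (Filter.Eventually.of_forall hcurl)
    _ = (∫ τ : ℝ, (inner ℝ w (fderiv ℝ A (x + τ • v) v) : ℝ))
          - ∫ τ : ℝ, (fderiv ℝ (fun z => A z 1) (x + τ • v) e0
              - fderiv ℝ (fun z => A z 0) (x + τ • v) e1) :=
        integral_sub (aux_int_scalar hA hA2 hC hv w v x) hQint
    _ = - ∫ τ : ℝ, (fderiv ℝ (fun z => A z 1) (x + τ • v) e0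
              - fderiv ℝ (fun z => A z 0) (x + τ • v) e1) := by
        rw [aux_ftc hA hA1 hA2 hC hv w x, zero_sub]
  -- final assembly
  calc (∫ x : EuclideanSpace ℝ (Fin 2), aF x *
          (v 0 * fderiv ℝ φ x e1 - v 1 * fderiv ℝ φ x e0))
      = ∫ x : EuclideanSpace ℝ (Fin 2), (χ x * aF x) * fderiv ℝ φ x w := by
        refine integral_congr_ae (Filter.Eventually.of_forall fun x => ?_)
        dsimp only
        have hφw : fderiv ℝ φ x w = v 0 * fderiv ℝ φ x e1 - v 1 * fderiv ℝ φ x e0 := by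
          rw [hwdef, ContinuousLinearMap.map_sub, ContinuousLinearMap.map_smul,
            ContinuousLinearMap.map_smul]
          simp
        by_cases hx : x ∈ tsupport φ
        · have h1 : χ x = 1 := by simpa using (hχ1 x hx).eq_of_nhds
          rw [h1, one_mul, hφw]
        · have hφ0 : φ =ᶠ[nhds x] 0 := notMem_tsupport_iff_eventuallyEq.1 hx
          have hd : fderiv ℝ φ x = 0 := by
            rw [hφ0.fderiv_eq]; exact fderiv_const_apply 0
          rw [hφw, hd]; simp
  _ = - ∫ x : EuclideanSpace ℝ (Fin 2),
        (χ x * Gf x + aF x * fderiv ℝ χ x w) * φ x := hIBP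
  _ = - ∫ x : EuclideanSpace ℝ (Fin 2), Gf x * φ x := by
        rw [integral_congr_ae (Filter.Eventually.of_forall heq)]
  _ = ∫ x : EuclideanSpace ℝ (Fin 2),
        (∫ τ : ℝ, (fderiv ℝ (fun y => A y 1) (x + τ • v) e0
          - fderiv ℝ (fun y => A y 0) (x + τ • v) e1)) * φ x := by
        rw [← integral_neg]
        refine integral_congr_ae (Filter.Eventually.of_forall fun x => ?_)
        dsimp only
        rw [hGfc x]
        ring
end
end
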